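/- arXiv:2103.02135 — 7 statements merged into one kernel-verified Lean document; each statement's English description precedes it below -/
import Mathlib

section
/- For all non-negative integers n, the number of pairs of partitions (λ¹, λ²) with |λ¹|+|λ²| = 3n+2, where each λⁱ is a partition with distinct odd parts (even parts unrestricted), is divisible by 3. -/
/-- A multiset of natural numbers represents a partition if all parts are positive. -/
def IsPartitionM (m : Multiset ℕ) : Prop := ∀ i ∈ m, 0 < i

/-- A partition all of whose parts are even (and positive). -/
def IsEvenPartition (m : Multiset ℕ) : Prop := IsPartitionM m ∧ ∀ i ∈ m, Even i

/-- A staircase partition: parts k, k-1, ..., 2, 1 (possibly empty). -/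
def IsStaircase (m : Multiset ℕ) : Prop := ∃ k : ℕ, m = (Multiset.range k).map (· + 1)

/-- An odd staircase: parts 2k-1, 2k-3, ..., 3, 1 (possibly empty); its size is k². -/
def IsOddStaircase (m : Multiset ℕ) : Prop := ∃ k : ℕ, m = (Multiset.range k).map (fun i => 2 * i + 1)

/-- A partition into distinct odd parts. -/
def IsDistinctOdd (m : Multiset ℕ) : Prop := m.Nodup ∧ ∀ i ∈ m, Odd i

/-- A partition whose odd parts are distinct (even parts unrestricted). -/
def IsPOD (m : Multiset ℕ) : Prop := IsPartitionM m ∧ ∀ i ∈ m, Odd i → m.count i ≤ 1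

/-- A partition into distinct parts, all divisible by 3. -/
def IsDistinctMul3 (m : Multiset ℕ) : Prop := IsPartitionM m ∧ m.Nodup ∧ ∀ i ∈ m, 3 ∣ i

/-- An overpartition: a partition together with a set of overlined part sizes,
each of which must occur in the partition. -/
def IsOverpartition (x : Multiset ℕ × Finset ℕ) : Prop :=
  IsPartitionM x.1 ∧ ∀ s ∈ x.2, s ∈ x.1

/-- A partition with designated summands: a partition together with, for each part size
occurring with multiplicity `c`, a choice of designated occurrence in `{1, ..., c}`
(and `0` for non-occurring sizes). -/
def IsDesignated (x : Multiset ℕ × (ℕ → ℕ)) : Prop :=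
  IsPartitionM x.1 ∧ ∀ s : ℕ,
    (0 < x.1.count s → 1 ≤ x.2 s ∧ x.2 s ≤ x.1.count s) ∧ (x.1.count s = 0 → x.2 s = 0)

/-!
Write a POD partition as its distinct odd parts `2s + 1`, `s ∈ S`, together with the halves of
its even parts. Subtracting the staircase `2(a-1) + 1, …, 3, 1` turns a set `S` of size `a` into a
partition with at most `a` parts, and `∑_{s ∈ S} (2s + 1) = a² + 2 · weight`. Gluing the partitions
coming from `S₁` and `S₂` to the two sides of an `|S₂| × |S₁|` rectangle is a bijective proof of
Gauss's identity `(-q; q²)∞² = ∑_k q^{k²} / (q²; q²)∞`: pairs `(S₁, S₂)` correspond to pairs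
`(k, μ)` with `k ∈ ℤ` and `∑ (2s + 1) = k² + 2|μ|`. Hence pairs of POD partitions of total size
`N` correspond to tuples `(k, μ, ν₁, ν₂)` with `k² + 2 (|μ| + |ν₁| + |ν₂|) = N`. Rotating the three
partitions is a permutation of order `3`, whose fixed points would give `N = k² + 6|μ|`; this is
impossible when `N ≡ 2 (mod 3)`.
-/

open Finset

theorem Equiv.Perm.prime_dvd_natCard_of_pow_eq_one {α : Type*} {p : ℕ} [Fact p.Prime]
    {σ : Equiv.Perm α} (hσ : σ ^ p = 1) (hfree : ∀ a, σ a ≠ a) : p ∣ Nat.card α := by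
  rcases finite_or_infinite α with _ | _
  · have := Fintype.ofFinite α
    rw [Nat.card_eq_fintype_card]
    by_contra hdvd
    obtain ⟨a, ha⟩ := Equiv.Perm.exists_fixed_point_of_prime (n := 1) hdvd (by rwa [pow_one])
    exact hfree a ha
  · simp

theorem Finset.card_filter_range_lt {a B : ℕ} (h : a ≤ B) : #{j ∈ range B | j < a} = a := by
  rw [range_eq_Ico, Ico_filter_lt]
  simp [h]

theorem Set.eq_Iio_ncard_of_isLowerSet {s : Set ℕ} (hs : IsLowerSet s) (hfin : s.Finite) :
    s = Set.Iio s.ncard := by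
  obtain rfl | ⟨a, rfl⟩ := hs.eq_univ_or_Iio
  · exact absurd hfin Set.infinite_univ
  · rw [Set.ncard_Iio_nat]

abbrev PartitionSeq : Type := {f : ℕ → ℕ // Antitone f ∧ ∃ B, f B = 0}

namespace PartitionSeq

noncomputable def conj (f : ℕ → ℕ) (j : ℕ) : ℕ := {i | j < f i}.ncard

noncomputable def weight (f : ℕ → ℕ) : ℕ := ∑ᶠ i, f i

variable {f : ℕ → ℕ} {B : ℕ}

theorem eq_zero_of_le (hf : Antitone f) (hB : f B = 0) {i : ℕ} (hi : B ≤ i) : f i = 0 :=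
  Nat.eq_zero_of_le_zero (hB ▸ hf hi)

theorem weight_eq_sum_range (hf : Antitone f) (hB : f B = 0) :
    weight f = ∑ i ∈ range B, f i :=
  finsum_eq_sum_of_support_subset f fun i hi => by
    by_contra hiB
    exact hi (eq_zero_of_le hf hB (by simpa using hiB))

theorem lt_conj_iff (hf : Antitone f) (hB : f B = 0) {i j : ℕ} : i < conj f j ↔ j < f i := by
  have hlower : IsLowerSet {i | j < f i} := fun i i' hii' hi => lt_of_lt_of_le hi (hf hii')
  have hfin : {i | j < f i}.Finite := (Set.finite_Iio B).subset fun i hi => by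
    by_contra hiB
    simp_all [eq_zero_of_le hf hB (not_lt.mp hiB)]
  exact (Set.ext_iff.mp (Set.eq_Iio_ncard_of_isLowerSet hlower hfin) i).symm

theorem conj_antitone (hf : Antitone f) (hB : f B = 0) : Antitone (conj f) := by
  intro j j' hjj'
  by_contra! h
  have := (lt_conj_iff hf hB).mp h
  exact lt_irrefl _ ((lt_conj_iff hf hB).mpr (hjj'.trans_lt this))

theorem conj_eq_zero (hf : Antitone f) (hB : f B = 0) {j : ℕ} (hj : f 0 ≤ j) : conj f j = 0 := by
  by_contra h
  have := (lt_conj_iff hf hB).mp (Nat.pos_of_ne_zero h)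
  omega

theorem conj_conj (hf : Antitone f) (hB : f B = 0) : conj (conj f) = f := by
  funext i
  have hc := conj_antitone hf hB
  have hc0 : conj f (f 0) = 0 := conj_eq_zero hf hB le_rfl
  have key : ∀ x, x < conj (conj f) i ↔ x < f i := fun x =>
    (lt_conj_iff hc hc0).trans (lt_conj_iff hf hB)
  exact le_antisymm (not_lt.mp fun h => lt_irrefl _ ((key _).mp h))
    (not_lt.mp fun h => lt_irrefl _ ((key _).mpr h))

theorem conj_le_of_eq_zero {a : ℕ} (ha : ∀ i, a ≤ i → f i = 0) (j : ℕ) : conj f j ≤ a := by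
  have hsub : {i | j < f i} ⊆ Set.Iio a := fun i hi => by
    by_contra h
    simp_all [ha i (not_lt.mp h)]
  exact (Set.ncard_le_ncard hsub (Set.finite_Iio a)).trans_eq (Set.ncard_Iio_nat a)

theorem conj_eq_card_filter (hf : Antitone f) (hB : f B = 0) (j : ℕ) :
    conj f j = #{i ∈ range B | j < f i} := by
  rw [conj, ← Set.ncard_coe_finset]
  congr 1
  ext i
  simp only [Set.mem_ofPred_eq, coe_filter, mem_range]
  exact ⟨fun h => ⟨by by_contra hiB; simp_all [eq_zero_of_le hf hB (not_lt.mp hiB)], h⟩,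
    And.right⟩

theorem sum_range_conj (hf : Antitone f) (hB : f B = 0) {M : ℕ} (hM : f 0 ≤ M) :
    ∑ j ∈ range M, conj f j = ∑ i ∈ range B, f i := by
  simp_rw [conj_eq_card_filter hf hB, card_filter]
  rw [sum_comm]
  refine sum_congr rfl fun i _ => ?_
  rw [← card_filter, card_filter_range_lt ((hf (Nat.zero_le i)).trans hM)]

/-- The conjugate of the partition with parts `m`: only weights matter below, so it encodes `m`
as well as its sorted parts would. -/
def ofMultiset (m : Multiset ℕ) (j : ℕ) : ℕ := m.countP (j < ·)

def toMultiset (f : ℕ → ℕ) (B : ℕ) : Multiset ℕ := ((Multiset.range B).map f).filter (0 < ·)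

theorem ofMultiset_antitone (m : Multiset ℕ) : Antitone (ofMultiset m) :=
  fun _ _ hjj' => by
    simp only [ofMultiset, Multiset.countP_eq_card_filter]
    exact Multiset.card_le_card (m.monotone_filter_right fun _ h => lt_of_le_of_lt hjj' h)

theorem ofMultiset_eq_zero {m : Multiset ℕ} (hB : ∀ x ∈ m, x ≤ B) : ofMultiset m B = 0 :=
  Multiset.countP_eq_zero.mpr fun x hx => not_lt.mpr (hB x hx)

theorem sum_range_ofMultiset {m : Multiset ℕ} (hB : ∀ x ∈ m, x ≤ B) :
    ∑ j ∈ range B, ofMultiset m j = m.sum := by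
  induction m using Multiset.induction_on with
  | empty => simp [ofMultiset]
  | cons a m ih =>
    simp only [Multiset.mem_cons, forall_eq_or_imp] at hB
    simp only [ofMultiset, Multiset.countP_cons, sum_add_distrib, Multiset.sum_cons] at ih ⊢
    rw [ih hB.2, sum_boole, Nat.cast_id, card_filter_range_lt hB.1, add_comm]

theorem ofMultiset_eq_count_add (m : Multiset ℕ) (j : ℕ) :
    ofMultiset m j = m.count (j + 1) + ofMultiset m (j + 1) := by
  induction m using Multiset.induction_on with
  | empty => simp [ofMultiset]
  | cons a m ih =>
    simp only [ofMultiset, Multiset.countP_cons, Multiset.count_cons] at ih ⊢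
    split_ifs <;> omega

theorem eq_of_ofMultiset_eq {m m' : Multiset ℕ} (hm : IsPartitionM m) (hm' : IsPartitionM m')
    (h : ofMultiset m = ofMultiset m') : m = m' := by
  ext x
  cases x with
  | zero =>
    rw [Multiset.count_eq_zero_of_notMem fun h0 => (hm 0 h0).ne rfl,
      Multiset.count_eq_zero_of_notMem fun h0 => (hm' 0 h0).ne rfl]
  | succ j =>
    have := ofMultiset_eq_count_add m j
    have := ofMultiset_eq_count_add m' j
    have := congrFun h j
    have := congrFun h (j + 1)
    omega

theorem ofMultiset_toMultiset (hf : Antitone f) (hB : f B = 0) :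
    ofMultiset (toMultiset f B) = conj f := by
  funext j
  rw [ofMultiset, toMultiset, Multiset.countP_filter, Multiset.countP_map,
    conj_eq_card_filter hf hB]
  exact congrArg Multiset.card (Multiset.filter_congr fun i _ => and_iff_left_of_imp (by omega))

theorem isPartitionM_toMultiset : IsPartitionM (toMultiset f B) :=
  fun _ hx => (Multiset.mem_filter.mp hx).2

theorem ofMultiset_sum_eq_zero (m : Multiset ℕ) : ofMultiset m m.sum = 0 :=
  ofMultiset_eq_zero fun _ hx => Multiset.le_sum_of_mem hx

noncomputable def multisetEquiv : {m : Multiset ℕ // IsPartitionM m} ≃ PartitionSeq where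
  toFun m := ⟨ofMultiset m, ofMultiset_antitone m, _, ofMultiset_sum_eq_zero m⟩
  invFun f := ⟨toMultiset (conj f.1) (f.1 0), isPartitionM_toMultiset⟩
  left_inv m := by
    have hc := conj_antitone (ofMultiset_antitone m.1) (ofMultiset_sum_eq_zero m.1)
    have hc0 := conj_eq_zero (ofMultiset_antitone m.1) (ofMultiset_sum_eq_zero m.1) le_rfl
    refine Subtype.ext (eq_of_ofMultiset_eq isPartitionM_toMultiset m.2 ?_)
    rw [ofMultiset_toMultiset hc hc0,
      conj_conj (ofMultiset_antitone m.1) (ofMultiset_sum_eq_zero m.1)]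
  right_inv := by
    rintro ⟨g, hg, B, hB⟩
    exact Subtype.ext (by
      change ofMultiset (toMultiset (conj g) (g 0)) = g
      rw [ofMultiset_toMultiset (conj_antitone hg hB) (conj_eq_zero hg hB le_rfl), conj_conj hg hB])

theorem weight_multisetEquiv (m : {m : Multiset ℕ // IsPartitionM m}) :
    weight (multisetEquiv m).1 = m.1.sum := by
  change weight (ofMultiset m.1) = _
  rw [weight_eq_sum_range (ofMultiset_antitone m.1) (ofMultiset_sum_eq_zero m.1)]
  exact sum_range_ofMultiset fun _ hx => Multiset.le_sum_of_mem hx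

end PartitionSeq

theorem Multiset.map_eq_self {α : Type*} {m : Multiset α} {f : α → α} (h : ∀ x ∈ m, f x = x) :
    m.map f = m := by
  rw [Multiset.map_congr rfl h, Multiset.map_id']

section POD

open Multiset

def oddSum (S : Finset ℕ) : ℕ := ∑ s ∈ S, (2 * s + 1)

def podOfParts (S : Finset ℕ) (ν : Multiset ℕ) : Multiset ℕ :=
  S.val.map (2 * · + 1) + ν.map (2 * ·)

def oddHalves (m : Multiset ℕ) : Multiset ℕ := (m.filter Odd).map (· / 2)

def evenHalves (m : Multiset ℕ) : Multiset ℕ := (m.filter (¬Odd ·)).map (· / 2)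

theorem isPOD_podOfParts (S : Finset ℕ) {ν : Multiset ℕ} (hν : IsPartitionM ν) :
    IsPOD (podOfParts S ν) := by
  refine ⟨fun x hx => ?_, fun x _ hodd => ?_⟩
  · rcases mem_add.mp hx with hx | hx <;> obtain ⟨y, hy, rfl⟩ := mem_map.mp hx
    · omega
    · have := hν y hy; omega
  · have hnodup : (S.val.map (2 * · + 1)).Nodup := S.nodup.map fun _ _ h => by omega
    have heven : count x (ν.map (2 * ·)) = 0 := count_eq_zero.mpr fun hx => by
      obtain ⟨y, -, rfl⟩ := mem_map.mp hx
      exact Nat.not_odd_iff_even.mpr (even_two_mul y) hodd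
    rw [podOfParts, count_add, heven, add_zero]
    exact nodup_iff_count_le_one.mp hnodup x

theorem sum_podOfParts (S : Finset ℕ) (ν : Multiset ℕ) :
    (podOfParts S ν).sum = oddSum S + 2 * ν.sum := by
  rw [podOfParts, sum_add, sum_map_mul_left, map_id', oddSum, Finset.sum_eq_multiset_sum]

theorem podOfParts_halves {m : Multiset ℕ} (hm : IsPOD m) :
    podOfParts (oddHalves m).toFinset (evenHalves m) = m := by
  have hnodup : (oddHalves m).Nodup := by
    refine Nodup.map_on (fun x hx y hy hxy => ?_) (nodup_iff_count_le_one.mpr fun x => ?_)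
    · obtain ⟨a, rfl⟩ := (mem_filter.mp hx).2
      obtain ⟨b, rfl⟩ := (mem_filter.mp hy).2
      omega
    · rw [count_filter]
      split_ifs with hodd
      · by_cases hx : x ∈ m
        · exact hm.2 x hx hodd
        · rw [count_eq_zero_of_notMem hx]; omega
      · omega
  rw [podOfParts, Multiset.toFinset_val, hnodup.dedup, oddHalves, evenHalves, Multiset.map_map,
    Multiset.map_map, map_eq_self fun x hx => ?_, map_eq_self fun x hx => ?_, filter_add_not]
  · have := Nat.not_odd_iff_even.mp (mem_filter.mp hx).2
    simp only [Function.comp_apply]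
    exact Nat.two_mul_div_two_of_even this
  · obtain ⟨a, rfl⟩ := (mem_filter.mp hx).2
    simp only [Function.comp_apply]
    omega

theorem oddHalves_podOfParts (S : Finset ℕ) (ν : Multiset ℕ) :
    oddHalves (podOfParts S ν) = S.val := by
  rw [oddHalves, podOfParts, filter_add, Multiset.filter_eq_self.mpr fun x hx => ?_,
    filter_eq_nil.mpr fun x hx => ?_, add_zero, Multiset.map_map, map_eq_self fun x _ => ?_]
  · simp only [Function.comp_apply]; omega
  · obtain ⟨y, -, rfl⟩ := mem_map.mp hx
    exact Nat.not_odd_iff_even.mpr (even_two_mul y)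
  · obtain ⟨y, -, rfl⟩ := mem_map.mp hx
    exact odd_two_mul_add_one y

theorem evenHalves_podOfParts (S : Finset ℕ) (ν : Multiset ℕ) :
    evenHalves (podOfParts S ν) = ν := by
  rw [evenHalves, podOfParts, filter_add, filter_eq_nil.mpr fun x hx => ?_,
    Multiset.filter_eq_self.mpr fun x hx => ?_, zero_add, Multiset.map_map,
    map_eq_self fun x _ => ?_]
  · simp only [Function.comp_apply]; omega
  · obtain ⟨y, -, rfl⟩ := mem_map.mp hx
    exact Nat.not_odd_iff_even.mpr (even_two_mul y)
  · obtain ⟨y, -, rfl⟩ := mem_map.mp hx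
    exact not_not.mpr (odd_two_mul_add_one y)

theorem isPartitionM_evenHalves {m : Multiset ℕ} (hm : IsPOD m) : IsPartitionM (evenHalves m) := by
  intro x hx
  obtain ⟨y, hy, rfl⟩ := mem_map.mp hx
  have := hm.1 y (mem_filter.mp hy).1
  obtain ⟨k, rfl⟩ := Nat.not_odd_iff_even.mp (mem_filter.mp hy).2
  omega

def podEquiv : {m : Multiset ℕ // IsPOD m} ≃ Finset ℕ × {ν : Multiset ℕ // IsPartitionM ν} where
  toFun m := ((oddHalves m.1).toFinset, ⟨evenHalves m.1, isPartitionM_evenHalves m.2⟩)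
  invFun p := ⟨podOfParts p.1 p.2.1, isPOD_podOfParts p.1 p.2.2⟩
  left_inv m := Subtype.ext (podOfParts_halves m.2)
  right_inv p := by
    ext : 1
    · simp [oddHalves_podOfParts]
    · exact Subtype.ext (evenHalves_podOfParts p.1 p.2.1)

theorem sum_eq_oddSum_add (m : {m : Multiset ℕ // IsPOD m}) :
    m.1.sum = oddSum (podEquiv m).1 + 2 * (podEquiv m).2.1.sum := by
  conv_lhs => rw [← podEquiv.symm_apply_apply m]
  exact sum_podOfParts _ _

end POD

section Peel

variable {S : Finset ℕ}

theorem Finset.nth_mem {i : ℕ} (h : i < #S) : Nat.nth (· ∈ S) i ∈ S :=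
  Nat.nth_mem_of_lt_card S.finite_toSet (by simpa using h)

theorem Finset.nth_lt_nth {i j : ℕ} (hij : i < j) (hj : j < #S) :
    Nat.nth (· ∈ S) i < Nat.nth (· ∈ S) j :=
  Nat.nth_lt_nth_of_lt_card S.finite_toSet hij (by simpa using hj)

theorem Finset.exists_nth_eq {x : ℕ} (hx : x ∈ S) : ∃ i < #S, Nat.nth (· ∈ S) i = x := by
  simpa using Nat.exists_lt_card_finite_nth_eq S.finite_toSet hx

theorem Finset.nth_add_le_nth {i j : ℕ} (hij : i ≤ j) (hj : j < #S) :
    Nat.nth (· ∈ S) i + (j - i) ≤ Nat.nth (· ∈ S) j := by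
  induction j, hij using Nat.le_induction with
  | base => simp
  | succ j hij ih =>
    have := Finset.nth_lt_nth (S := S) (Nat.lt_add_one j) hj
    have := ih (by omega)
    omega

theorem Finset.nth_eq_of_strictMonoOn {g : ℕ → ℕ} (hg : StrictMonoOn g (Set.Iio #S))
    (himage : (range #S).image g = S) {j : ℕ} (hj : j < #S) : Nat.nth (· ∈ S) j = g j := by
  have hset : {n : ℕ | ∀ hf : (Set.ofPred (· ∈ S)).Finite, n < #hf.toFinset} = Set.Iio #S := by
    ext n
    simp
  refine (Nat.eq_nth_of_strictMonoOn_of_mapsTo_of_surjOn g ?_ ?_ ?_ (by simpa [hset] using hj)).symm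
  · rw [hset]
    intro x (hx : x ∈ S)
    rw [← himage] at hx
    obtain ⟨n, hn, rfl⟩ := mem_image.mp hx
    exact ⟨n, by simpa using hn, rfl⟩
  · rw [hset]
    intro n hn
    show g n ∈ S
    rw [← himage]
    exact mem_image_of_mem g (by simpa using hn)
  · rwa [hset]

/-- Subtracting the staircase `a - 1, …, 1, 0` from the elements of `S`, listed in decreasing
order, leaves a partition into at most `a = #S` parts. -/
noncomputable def peel (S : Finset ℕ) (i : ℕ) : ℕ :=
  if i < #S then Nat.nth (· ∈ S) (#S - 1 - i) - (#S - 1 - i) else 0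

def unpeel (a : ℕ) (d : ℕ → ℕ) : Finset ℕ := (range a).image fun j => d (a - 1 - j) + j

theorem peel_antitone (S : Finset ℕ) : Antitone (peel S) := by
  intro i i' hii'
  unfold peel
  split_ifs with hi' hi
  · have := Finset.nth_add_le_nth (S := S) (show #S - 1 - i' ≤ #S - 1 - i by omega) (by omega)
    omega
  · omega
  · exact Nat.zero_le _
  · exact le_rfl

theorem peel_of_le {i : ℕ} (hi : #S ≤ i) : peel S i = 0 := if_neg (by omega)

theorem peel_add {j : ℕ} (hj : j < #S) : peel S (#S - 1 - j) + j = Nat.nth (· ∈ S) j := by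
  have := Finset.nth_add_le_nth (S := S) (Nat.zero_le j) hj
  rw [peel, if_pos (by omega), show #S - 1 - (#S - 1 - j) = j by omega]
  omega

theorem unpeel_peel (S : Finset ℕ) : unpeel #S (peel S) = S := by
  ext x
  simp only [unpeel, mem_image, mem_range]
  constructor
  · rintro ⟨j, hj, rfl⟩
    rw [peel_add hj]
    exact Finset.nth_mem hj
  · intro hx
    obtain ⟨j, hj, rfl⟩ := Finset.exists_nth_eq hx
    exact ⟨j, hj, peel_add hj⟩

variable {a : ℕ} {d : ℕ → ℕ}

theorem unpeel_strictMonoOn (hd : Antitone d) :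
    StrictMonoOn (fun j => d (a - 1 - j) + j) (Set.Iio a) := by
  intro j hj j' hj' hjj'
  have := hd (show a - 1 - j' ≤ a - 1 - j by omega)
  show d (a - 1 - j) + j < d (a - 1 - j') + j'
  omega

theorem card_unpeel (hd : Antitone d) : #(unpeel a d) = a := by
  rw [unpeel, card_image_of_injOn, card_range]
  simpa using (unpeel_strictMonoOn hd).injOn

theorem peel_unpeel (hd : Antitone d) (hda : ∀ i, a ≤ i → d i = 0) : peel (unpeel a d) = d := by
  funext i
  have hcard := card_unpeel (a := a) hd
  by_cases hi : i < a
  · have hnth := Finset.nth_eq_of_strictMonoOn (S := unpeel a d) (j := a - 1 - i)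
      (by rw [hcard]; exact unpeel_strictMonoOn hd) (by rw [hcard]; rfl) (by omega)
    rw [peel, if_pos (by omega), hcard, hnth, show a - 1 - (a - 1 - i) = i by omega,
      Nat.add_sub_cancel]
  · rw [peel_of_le (by omega), hda i (by omega)]

theorem sum_unpeel (hd : Antitone d) :
    ∑ x ∈ unpeel a d, (2 * x + 1) = a ^ 2 + 2 * ∑ i ∈ range a, d i := by
  rw [unpeel, sum_image (by simpa using (unpeel_strictMonoOn hd).injOn)]
  have hstair : ∑ i ∈ range a, 2 * i + a = a ^ 2 := by
    rw [← mul_sum, mul_comm, sum_range_id_mul_two]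
    cases a <;> simp [sq, Nat.mul_succ]
  have hsplit : ∀ j, 2 * (d (a - 1 - j) + j) + 1 = 2 * d (a - 1 - j) + 2 * j + 1 := fun j => by
    ring
  simp only [hsplit, sum_add_distrib, ← mul_sum, sum_const, card_range, smul_eq_mul, mul_one,
    sum_range_reflect d a]
  omega

end Peel

abbrev LengthBoundedPartitionSeq : Type :=
  {p : ℕ × (ℕ → ℕ) // Antitone p.2 ∧ ∀ i, p.1 ≤ i → p.2 i = 0}

noncomputable def peelEquiv : Finset ℕ ≃ LengthBoundedPartitionSeq where
  toFun S := ⟨(#S, peel S), peel_antitone S, fun _ => peel_of_le⟩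
  invFun p := unpeel p.1.1 p.1.2
  left_inv := unpeel_peel
  right_inv p := Subtype.ext (Prod.ext (card_unpeel p.2.1) (peel_unpeel p.2.1 p.2.2))

theorem oddSum_eq_sq_add (S : Finset ℕ) :
    oddSum S = (peelEquiv S).1.1 ^ 2 + 2 * PartitionSeq.weight (peelEquiv S).1.2 := by
  change oddSum S = #S ^ 2 + 2 * PartitionSeq.weight (peel S)
  rw [PartitionSeq.weight_eq_sum_range (peel_antitone S) (peel_of_le le_rfl)]
  conv_lhs => rw [← unpeel_peel S]
  exact sum_unpeel (peel_antitone S)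

namespace Durfee

open PartitionSeq

/-- The partition made of a `c × a` rectangle, the partition `e` (at most `c` parts) glued to
the right of its rows, and the conjugate of `d` (at most `a` parts) glued below it. -/
noncomputable def join (a c : ℕ) (d e : ℕ → ℕ) (j : ℕ) : ℕ :=
  if j < c then e j + a else conj d (j - c)

/-- Recovers `c` from `k = a - c` and `μ = join a c d e`: exactly the rows `j < c` satisfy
`j + k < μ j`. -/
noncomputable def rows (k : ℤ) (μ : ℕ → ℕ) : ℕ := {j : ℕ | (j : ℤ) + k < μ j}.ncard

noncomputable def cols (k : ℤ) (μ : ℕ → ℕ) : ℕ := ((rows k μ : ℤ) + k).toNat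

noncomputable def right (k : ℤ) (μ : ℕ → ℕ) (j : ℕ) : ℕ :=
  if j < rows k μ then μ j - cols k μ else 0

noncomputable def below (k : ℤ) (μ : ℕ → ℕ) : ℕ → ℕ := conj fun j => μ (j + rows k μ)

variable {a c : ℕ} {d e : ℕ → ℕ}

theorem join_antitone (hd : Antitone d) (hda : ∀ i, a ≤ i → d i = 0) (he : Antitone e) :
    Antitone (join a c d e) := by
  intro j j' hjj'
  have hconj := conj_antitone hd (hda a le_rfl)
  have hle := conj_le_of_eq_zero hda (j' - c)
  unfold join
  split_ifs with h' h
  · have := he hjj'; omega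
  · omega
  · omega
  · exact hconj (by omega)

theorem join_eq_zero (hd : Antitone d) (hda : ∀ i, a ≤ i → d i = 0) :
    join a c d e (c + d 0) = 0 := by
  rw [join, if_neg (by omega), Nat.add_sub_cancel_left]
  exact conj_eq_zero hd (hda a le_rfl) le_rfl

theorem lt_join_iff (hda : ∀ i, a ≤ i → d i = 0) (j : ℕ) :
    (j : ℤ) + (a - c) < join a c d e j ↔ j < c := by
  have := conj_le_of_eq_zero hda (j - c)
  unfold join
  split_ifs with h <;> omega

theorem weight_join (hd : Antitone d) (hda : ∀ i, a ≤ i → d i = 0) (he : Antitone e)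
    (hec : ∀ j, c ≤ j → e j = 0) :
    weight (join a c d e) = c * a + weight e + weight d := by
  rw [weight_eq_sum_range (join_antitone hd hda he) (join_eq_zero hd hda), sum_range_add,
    weight_eq_sum_range he (hec c le_rfl), weight_eq_sum_range hd (hda a le_rfl),
    ← sum_range_conj hd (hda a le_rfl) le_rfl]
  have hrect : ∀ j ∈ range c, join a c d e j = e j + a := fun j hj =>
    if_pos (mem_range.mp hj)
  have hbelow : ∀ x ∈ range (d 0), join a c d e (c + x) = conj d x := fun x _ => by
    rw [join, if_neg (by omega), Nat.add_sub_cancel_left]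
  rw [sum_congr rfl hrect, sum_congr rfl hbelow, sum_add_distrib, sum_const, card_range,
    smul_eq_mul]
  ring

theorem rows_join (hda : ∀ i, a ≤ i → d i = 0) : rows (a - c) (join a c d e) = c := by
  rw [rows, show {j : ℕ | (j : ℤ) + (a - c) < join a c d e j} = Set.Iio c from
    Set.ext (lt_join_iff hda), Set.ncard_Iio_nat]

theorem cols_join (hda : ∀ i, a ≤ i → d i = 0) : cols (a - c) (join a c d e) = a := by
  rw [cols, rows_join hda]
  omega

theorem right_join (hda : ∀ i, a ≤ i → d i = 0) (hec : ∀ j, c ≤ j → e j = 0) :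
    right (a - c) (join a c d e) = e := by
  funext j
  rw [right, rows_join hda, cols_join hda, join]
  split_ifs with h
  · omega
  · exact (hec j (not_lt.mp h)).symm

theorem below_join (hd : Antitone d) (hda : ∀ i, a ≤ i → d i = 0) :
    below (a - c) (join a c d e) = d := by
  rw [below, rows_join hda]
  convert conj_conj hd (hda a le_rfl) using 2
  funext j
  simp only [join, if_neg (show ¬j + c < c by omega), Nat.add_sub_cancel]

variable {k : ℤ} {μ : ℕ → ℕ} {B : ℕ}

theorem lt_rows_iff (hμ : Antitone μ) (hB : μ B = 0) (j : ℕ) :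
    j < rows k μ ↔ (j : ℤ) + k < μ j := by
  have hlower : IsLowerSet {j : ℕ | (j : ℤ) + k < μ j} := fun i i' hii' hi => by
    have := hμ hii'
    simp only [Set.mem_ofPred_eq] at hi ⊢
    omega
  have hfin : {j : ℕ | (j : ℤ) + k < μ j}.Finite :=
    (Set.finite_Iio (B + (-k).toNat)).subset fun i hi => by
      by_contra hiB
      have := eq_zero_of_le hμ hB (show B ≤ i by simp at hiB; omega)
      simp only [Set.mem_ofPred_eq, Set.mem_Iio] at hi hiB
      omega
  exact (Set.ext_iff.mp (Set.eq_Iio_ncard_of_isLowerSet hlower hfin) j).symm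

theorem apply_rows_le (hμ : Antitone μ) (hB : μ B = 0) :
    (μ (rows k μ) : ℤ) ≤ rows k μ + k := by
  have := (lt_rows_iff (k := k) hμ hB (rows k μ)).not
  simp only [lt_irrefl, not_false_eq_true, true_iff, not_lt] at this
  exact this

theorem cast_cols (hμ : Antitone μ) (hB : μ B = 0) : (cols k μ : ℤ) = rows k μ + k := by
  have := apply_rows_le (k := k) hμ hB
  rw [cols]
  omega

theorem cols_le (hμ : Antitone μ) (hB : μ B = 0) {j : ℕ} (hj : j < rows k μ) :
    cols k μ ≤ μ j := by
  have hlast := (lt_rows_iff (k := k) hμ hB (rows k μ - 1)).mp (by omega)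
  have := hμ (show j ≤ rows k μ - 1 by omega)
  have := cast_cols (k := k) hμ hB
  omega

theorem right_antitone (hμ : Antitone μ) : Antitone (right k μ) := by
  intro j j' hjj'
  have := hμ hjj'
  unfold right
  split_ifs <;> omega

theorem right_eq_zero {j : ℕ} (hj : rows k μ ≤ j) : right k μ j = 0 := if_neg (by omega)

theorem shift_eq_zero (hμ : Antitone μ) (hB : μ B = 0) (r : ℕ) : μ (B + r) = 0 :=
  eq_zero_of_le hμ hB (Nat.le_add_right B r)

theorem below_antitone (hμ : Antitone μ) (hB : μ B = 0) : Antitone (below k μ) :=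
  conj_antitone (fun _ _ h => hμ (Nat.add_le_add_right h _)) (shift_eq_zero hμ hB _)

theorem below_eq_zero (hμ : Antitone μ) (hB : μ B = 0) {i : ℕ} (hi : cols k μ ≤ i) :
    below k μ i = 0 := by
  have := apply_rows_le (k := k) hμ hB
  have := cast_cols (k := k) hμ hB
  exact conj_eq_zero (fun _ _ h => hμ (Nat.add_le_add_right h _)) (shift_eq_zero hμ hB _)
    (by simp only [Nat.zero_add]; omega)

theorem join_cols_rows (hμ : Antitone μ) (hB : μ B = 0) :
    join (cols k μ) (rows k μ) (below k μ) (right k μ) = μ := by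
  funext j
  unfold join
  split_ifs with hj
  · have := cols_le hμ hB hj
    rw [right, if_pos hj]
    omega
  · rw [below, conj_conj (fun _ _ h => hμ (Nat.add_le_add_right h _)) (shift_eq_zero hμ hB _)]
    exact congrArg μ (Nat.sub_add_cancel (not_lt.mp hj))

end Durfee

open PartitionSeq Durfee in
noncomputable def durfeeEquiv :
    LengthBoundedPartitionSeq × LengthBoundedPartitionSeq ≃ ℤ × PartitionSeq where
  toFun p := ((p.1.1.1 : ℤ) - p.2.1.1, ⟨join p.1.1.1 p.2.1.1 p.1.1.2 p.2.1.2,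
    join_antitone p.1.2.1 p.1.2.2 p.2.2.1, _, join_eq_zero p.1.2.1 p.1.2.2⟩)
  invFun q :=
    (⟨(cols q.1 q.2.1, below q.1 q.2.1), q.2.2.2.elim fun _ hB => below_antitone q.2.2.1 hB,
      q.2.2.2.elim fun _ hB _ => below_eq_zero q.2.2.1 hB⟩,
     ⟨(rows q.1 q.2.1, right q.1 q.2.1), right_antitone q.2.2.1, fun _ => right_eq_zero⟩)
  left_inv := by
    rintro ⟨⟨⟨a, d⟩, hd, hda⟩, ⟨⟨c, e⟩, he, hec⟩⟩
    exact Prod.ext (Subtype.ext (Prod.ext (cols_join hda) (below_join hd hda)))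
      (Subtype.ext (Prod.ext (rows_join hda) (right_join hda hec)))
  right_inv := by
    rintro ⟨k, μ, hμ, B, hB⟩
    refine Prod.ext ?_ (Subtype.ext (join_cols_rows hμ hB))
    change (cols k μ : ℤ) - rows k μ = k
    rw [cast_cols hμ hB]
    ring

theorem weight_durfeeEquiv (p : LengthBoundedPartitionSeq × LengthBoundedPartitionSeq) :
    PartitionSeq.weight (durfeeEquiv p).2.1 =
      p.2.1.1 * p.1.1.1 + PartitionSeq.weight p.2.1.2 + PartitionSeq.weight p.1.1.2 :=
  Durfee.weight_join p.1.2.1 p.1.2.2 p.2.2.1 p.2.2.2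

noncomputable def gaussEquiv : Finset ℕ × Finset ℕ ≃ ℤ × PartitionSeq :=
  (peelEquiv.prodCongr peelEquiv).trans durfeeEquiv

theorem oddSum_add_oddSum (p : Finset ℕ × Finset ℕ) :
    ((oddSum p.1 + oddSum p.2 : ℕ) : ℤ) =
      (gaussEquiv p).1 ^ 2 + 2 * PartitionSeq.weight (gaussEquiv p).2.1 := by
  have hw := weight_durfeeEquiv (peelEquiv p.1, peelEquiv p.2)
  rw [oddSum_eq_sq_add, oddSum_eq_sq_add]
  change _ = ((peelEquiv p.1).1.1 - (peelEquiv p.2).1.1 : ℤ) ^ 2 +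
    2 * PartitionSeq.weight (durfeeEquiv (peelEquiv p.1, peelEquiv p.2)).2.1
  rw [hw]
  push_cast
  ring

theorem Int.sq_emod_three_ne_two (k : ℤ) : k ^ 2 % 3 ≠ 2 := by
  have : k % 3 = 0 ∨ k % 3 = 1 ∨ k % 3 = 2 := by omega
  rcases this with h | h | h <;> simp [pow_two, Int.mul_emod, h]

theorem three_dvd_card_of_emod_three_eq_two {β : Type*} (w : β → ℤ) {N : ℤ} (hN : N % 3 = 2) :
    3 ∣ Nat.card {y : ℤ × β × β × β // y.1 ^ 2 + 2 * (w y.2.1 + w y.2.2.1 + w y.2.2.2) = N} := by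
  let σ : Equiv.Perm {y : ℤ × β × β × β // y.1 ^ 2 + 2 * (w y.2.1 + w y.2.2.1 + w y.2.2.2) = N} :=
    { toFun y := ⟨(y.1.1, y.1.2.2.1, y.1.2.2.2, y.1.2.1), by linear_combination y.2⟩
      invFun y := ⟨(y.1.1, y.1.2.2.2, y.1.2.1, y.1.2.2.1), by linear_combination y.2⟩
      left_inv _ := rfl
      right_inv _ := rfl }
  have : Fact (Nat.Prime 3) := ⟨Nat.prime_three⟩
  refine Equiv.Perm.prime_dvd_natCard_of_pow_eq_one (σ := σ) (Equiv.ext fun _ => rfl) ?_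
  rintro ⟨⟨k, μ, f, g⟩, hy⟩ hfix
  simp only [σ, Equiv.coe_fn_mk, Subtype.mk.injEq, Prod.mk.injEq] at hfix
  obtain ⟨-, rfl, rfl, -⟩ := hfix
  dsimp only at hy
  apply Int.sq_emod_three_ne_two k
  omega

noncomputable def podPairEquiv :
    {m : Multiset ℕ // IsPOD m} × {m : Multiset ℕ // IsPOD m} ≃
      ℤ × PartitionSeq × PartitionSeq × PartitionSeq :=
  ((podEquiv.prodCongr podEquiv).trans (Equiv.prodProdProdComm _ _ _ _)).trans
    ((gaussEquiv.prodCongr (PartitionSeq.multisetEquiv.prodCongr PartitionSeq.multisetEquiv)).trans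
      (Equiv.prodAssoc _ _ _))

open PartitionSeq in
theorem sum_add_sum_eq (p : {m : Multiset ℕ // IsPOD m} × {m : Multiset ℕ // IsPOD m}) :
    ((p.1.1.sum + p.2.1.sum : ℕ) : ℤ) = (podPairEquiv p).1 ^ 2 +
      2 * ((weight (podPairEquiv p).2.1.1 : ℤ) + weight (podPairEquiv p).2.2.1.1 +
        weight (podPairEquiv p).2.2.2.1) := by
  have hgauss := oddSum_add_oddSum ((podEquiv p.1).1, (podEquiv p.2).1)
  rw [sum_eq_oddSum_add p.1, sum_eq_oddSum_add p.2, ← weight_multisetEquiv (podEquiv p.1).2,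
    ← weight_multisetEquiv (podEquiv p.2).2]
  simp only [podPairEquiv, Equiv.trans_apply, Equiv.prodCongr_apply, Prod.map,
    Equiv.prodProdProdComm_apply, Equiv.prodAssoc_apply] at hgauss ⊢
  push_cast at hgauss ⊢
  linear_combination hgauss

open PartitionSeq in
noncomputable def podPairSubtypeEquiv (N : ℕ) :
    {x : Multiset ℕ × Multiset ℕ // IsPOD x.1 ∧ IsPOD x.2 ∧ x.1.sum + x.2.sum = N} ≃
      {y : ℤ × PartitionSeq × PartitionSeq × PartitionSeq //
        y.1 ^ 2 + 2 * ((weight y.2.1.1 : ℤ) + weight y.2.2.1.1 + weight y.2.2.2.1) = N} :=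
  ({ toFun x := ⟨(⟨x.1.1, x.2.1⟩, ⟨x.1.2, x.2.2.1⟩), x.2.2.2⟩
     invFun p := ⟨(p.1.1.1, p.1.2.1), p.1.1.2, p.1.2.2, p.2⟩
     left_inv _ := rfl
     right_inv _ := rfl } :
    {x : Multiset ℕ × Multiset ℕ // IsPOD x.1 ∧ IsPOD x.2 ∧ x.1.sum + x.2.sum = N} ≃
      {p : {m : Multiset ℕ // IsPOD m} × {m : Multiset ℕ // IsPOD m} //
        p.1.1.sum + p.2.1.sum = N}).trans
  (podPairEquiv.subtypeEquiv fun p => by rw [← sum_add_sum_eq, Nat.cast_inj])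

theorem pod2_congruence (n : ℕ) :
    3 ∣ Nat.card {x : Multiset ℕ × Multiset ℕ //
      IsPOD x.1 ∧ IsPOD x.2 ∧ x.1.sum + x.2.sum = 3 * n + 2} := by
  rw [Nat.card_congr (podPairSubtypeEquiv (3 * n + 2))]
  exact three_dvd_card_of_emod_three_eq_two (fun f : PartitionSeq => (PartitionSeq.weight f.1 : ℤ))
    (by omega)
end

section
/- For all non-negative integers n, the number of pairs of overpartitions (λ¹, λ²) with |λ¹|+|λ²| = 3n+2 is divisible by 3. -/
/-!
Writing `P̄(q) = ∑ p̄(n) qⁿ = ∏ (1 + qⁿ)/(1 - qⁿ)` for the overpartition generating function,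
Gauss's identity says `1 / P̄(q) = θ(-q) = ∑_{j ∈ ℤ} (-1)^j q^{j²}`. Hence the pairs are counted by
`P̄² = P̄³ · θ(-q)`, and modulo 3 the cube `P̄³` is a series in `q³`. Since no square is `2 mod 3`,
every coefficient of `q^{3n+2}` in `P̄³ · θ(-q)` vanishes mod 3.

Gauss's identity is obtained as the limit of its finite form
`∑_{|j| ≤ n} (-1)^j q^{j²} [2n, n+j]_{q²} = ∏_{i<n} (1 - q^{2i+1})²`, a specialisation of the
`q`-binomial theorem, using that `[2n, n+j]_{q²} (q²; q²)_n ≡ 1` modulo `q^{2(n-|j|)+2}`.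
-/

open PowerSeries Finset Filter Topology

section Counting

def Overpartitions (n : ℕ) : Type :=
  {x : Multiset ℕ × Finset ℕ // IsOverpartition x ∧ x.1.sum = n}

def overpartitionsEquiv (n : ℕ) :
    Overpartitions n ≃ Σ p : n.Partition, {s // s ∈ p.parts.toFinset.powerset} where
  toFun x := ⟨⟨x.1.1, fun hi => x.2.1.1 _ hi, x.2.2⟩,
    ⟨x.1.2, mem_powerset.2 fun s hs => Multiset.mem_toFinset.2 (x.2.1.2 s hs)⟩⟩
  invFun p := ⟨(p.1.parts, p.2.1), ⟨fun _ hi => p.1.parts_pos hi,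
    fun _ hs => Multiset.mem_toFinset.1 (mem_powerset.1 p.2.2 hs)⟩, p.1.parts_sum⟩
  left_inv _ := rfl
  right_inv _ := rfl

instance (n : ℕ) : Finite (Overpartitions n) := .of_equiv _ (overpartitionsEquiv n).symm

theorem card_overpartitions (n : ℕ) :
    Nat.card (Overpartitions n) = ∑ p : n.Partition, 2 ^ p.parts.toFinset.card := by
  rw [Nat.card_congr (overpartitionsEquiv n), Nat.card_eq_fintype_card, Fintype.card_sigma]
  simp

def overpartitionPairsEquiv (N : ℕ) :
    {x : (Multiset ℕ × Finset ℕ) × (Multiset ℕ × Finset ℕ) //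
      IsOverpartition x.1 ∧ IsOverpartition x.2 ∧ x.1.1.sum + x.2.1.sum = N} ≃
    Σ ij : antidiagonal N, Overpartitions ij.1.1 × Overpartitions ij.1.2 where
  toFun x := ⟨⟨(x.1.1.1.sum, x.1.2.1.sum), mem_antidiagonal.2 x.2.2.2⟩,
    ⟨x.1.1, x.2.1, rfl⟩, ⟨x.1.2, x.2.2.1, rfl⟩⟩
  invFun y := ⟨(y.2.1.1, y.2.2.1), y.2.1.2.1, y.2.2.2.1, by
    rw [y.2.1.2.2, y.2.2.2.2]; exact mem_antidiagonal.1 y.1.2⟩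
  left_inv _ := rfl
  right_inv := by
    rintro ⟨⟨⟨i, j⟩, hij⟩, ⟨x, hx, hxi : x.1.sum = i⟩, ⟨y, hy, hyj : y.1.sum = j⟩⟩
    subst hxi hyj
    rfl

theorem card_overpartition_pairs (N : ℕ) :
    Nat.card {x : (Multiset ℕ × Finset ℕ) × (Multiset ℕ × Finset ℕ) //
      IsOverpartition x.1 ∧ IsOverpartition x.2 ∧ x.1.1.sum + x.2.1.sum = N} =
    ∑ ij ∈ antidiagonal N, Nat.card (Overpartitions ij.1) * Nat.card (Overpartitions ij.2) := by
  rw [Nat.card_congr (overpartitionPairsEquiv N), Nat.card_sigma, univ_eq_attach]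
  simp only [Nat.card_prod]
  exact sum_attach _ fun ij : ℕ × ℕ =>
    Nat.card (Overpartitions ij.1) * Nat.card (Overpartitions ij.2)

end Counting

section GaussianBinomial

variable {R : Type*} [CommRing R] (q : R)

def qBinom : ℕ → ℕ → R
  | _, 0 => 1
  | 0, _ + 1 => 0
  | n + 1, k + 1 => qBinom n k + q ^ (k + 1) * qBinom n (k + 1)

def qPochhammer (n : ℕ) : R := ∏ i ∈ range n, (1 - q ^ (i + 1))

@[simp] theorem qBinom_zero_right (n : ℕ) : qBinom q n 0 = 1 := by cases n <;> rfl

theorem qBinom_succ_succ (n k : ℕ) :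
    qBinom q (n + 1) (k + 1) = qBinom q n k + q ^ (k + 1) * qBinom q n (k + 1) := rfl

theorem qBinom_eq_zero_of_lt : ∀ {n k : ℕ}, n < k → qBinom q n k = 0
  | 0, _ + 1, _ => rfl
  | n + 1, k + 1, h => by
    rw [qBinom_succ_succ, qBinom_eq_zero_of_lt (by omega), qBinom_eq_zero_of_lt (by omega)]
    ring

@[simp] theorem qBinom_self : ∀ n : ℕ, qBinom q n n = 1
  | 0 => rfl
  | n + 1 => by rw [qBinom_succ_succ, qBinom_self n, qBinom_eq_zero_of_lt q n.lt_succ_self]; ring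

theorem qPochhammer_succ (n : ℕ) :
    qPochhammer q (n + 1) = qPochhammer q n * (1 - q ^ (n + 1)) := prod_range_succ _ _

theorem qBinom_mul_qPochhammer_mul_qPochhammer : ∀ n k : ℕ,
    qBinom q (n + k) k * qPochhammer q k * qPochhammer q n = qPochhammer q (n + k)
  | n, 0 => by simp [qPochhammer]
  | 0, k + 1 => by simp [qPochhammer]
  | n + 1, k + 1 => by
    have h₁ := qBinom_mul_qPochhammer_mul_qPochhammer (n + 1) k
    have h₂ := qBinom_mul_qPochhammer_mul_qPochhammer n (k + 1)
    rw [show n + 1 + k = n + k + 1 by ring] at h₁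
    rw [show n + (k + 1) = n + k + 1 by ring] at h₂
    rw [show n + 1 + (k + 1) = n + k + 1 + 1 by ring, qBinom_succ_succ]
    simp only [qPochhammer_succ] at h₁ h₂ ⊢
    linear_combination (1 - q ^ (k + 1)) * h₁ + q ^ (k + 1) * (1 - q ^ (n + 1)) * h₂
  termination_by n k => n + k

/-- The `q`-binomial theorem (Rothe), in homogeneous form. -/
theorem prod_add_pow_mul_eq_sum_qBinom (m : ℕ) : ∀ a b : R,
    ∏ i ∈ range m, (a + q ^ i * b) =
      ∑ p ∈ antidiagonal m, q ^ p.1.choose 2 * qBinom q m p.1 * a ^ p.2 * b ^ p.1 := by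
  induction m with
  | zero => simp
  | succ m ih =>
    intro a b
    let f : ℕ × ℕ → R := fun p => q ^ (p.1 + 1).choose 2 * qBinom q m p.1 * a ^ p.2 * b ^ p.1
    let g : ℕ × ℕ → R := fun p => f p * b
    have e₁ := Nat.sum_antidiagonal_succ (f := f) (n := m)
    have e₂ := Nat.sum_antidiagonal_succ' (f := f) (n := m)
    have hf : f (m + 1, 0) = 0 := by simp [f, qBinom_eq_zero_of_lt q m.lt_succ_self]
    have hq : ∀ i, a + q ^ (i + 1) * b = a + q ^ i * (q * b) := fun i => by ring
    rw [prod_range_succ', pow_zero, one_mul, prod_congr rfl fun i _ => hq i, ih,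
      Nat.sum_antidiagonal_succ, sum_mul]
    calc ∑ p ∈ antidiagonal m, q ^ p.1.choose 2 * qBinom q m p.1 * a ^ p.2 * (q * b) ^ p.1 * (a + b)
        = ∑ p ∈ antidiagonal m, (f (p.1, p.2 + 1) + g p) := by
          refine sum_congr rfl fun p _ => ?_
          simp only [f, g, Nat.choose_succ_succ', Nat.choose_one_right]
          ring
      _ = f (0, m + 1) + ∑ p ∈ antidiagonal m, (f (p.1 + 1, p.2) + g p) := by
          rw [sum_add_distrib, sum_add_distrib]
          linear_combination e₂.symm.trans e₁ - hf
      _ = _ := by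
          congr 1
          · simp [f]
          refine sum_congr rfl fun p _ => ?_
          simp only [f, g, qBinom_succ_succ, Nat.choose_succ_succ' (p.1 + 1), Nat.choose_one_right]
          ring

theorem qPochhammer_two_mul (n : ℕ) :
    qPochhammer q (2 * n) = (∏ i ∈ range n, (1 - q ^ (2 * i + 1))) * qPochhammer (q ^ 2) n := by
  induction n with
  | zero => simp [qPochhammer]
  | succ n ih =>
    rw [show 2 * (n + 1) = 2 * n + 1 + 1 by ring, qPochhammer_succ, qPochhammer_succ, ih,
      qPochhammer_succ, prod_range_succ]
    ring

theorem qPochhammer_mul_prod_one_add_pow (n : ℕ) :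
    qPochhammer q n * ∏ i ∈ range n, (1 + q ^ (i + 1)) = qPochhammer (q ^ 2) n := by
  rw [qPochhammer, qPochhammer, ← prod_mul_distrib]
  exact prod_congr rfl fun i _ => by ring

theorem prod_range_pow_two_mul_add_two (n : ℕ) :
    ∏ i ∈ range n, q ^ (2 * i + 2) = q ^ (n * (n + 1)) := by
  induction n with
  | zero => simp
  | succ n ih => rw [prod_range_succ, ih, ← pow_add]; ring_nf

theorem prod_range_two_mul_pow_sub_pow (n : ℕ) :
    ∏ i ∈ range (2 * n), (q ^ (2 * n + 1) - q ^ (2 * i + 2)) =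
      (-1) ^ n * q ^ (3 * n ^ 2 + 2 * n) * (∏ i ∈ range n, (1 - q ^ (2 * i + 1))) ^ 2 := by
  have hlow : ∏ i ∈ range n, (q ^ (2 * n + 1) - q ^ (2 * i + 2)) =
      ∏ i ∈ range n, ((-1) * q ^ (2 * i + 2) * (1 - q ^ (2 * (n - 1 - i) + 1))) := by
    refine prod_congr rfl fun i hi => ?_
    have : 2 * n + 1 = 2 * (n - 1 - i) + 1 + (2 * i + 2) := by
      have := mem_range.1 hi; omega
    rw [this, pow_add]; ring
  have hhigh : ∏ i ∈ range n, (q ^ (2 * n + 1) - q ^ (2 * (n + i) + 2)) =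
      ∏ i ∈ range n, (q ^ (2 * n + 1) * (1 - q ^ (2 * i + 1))) := by
    refine prod_congr rfl fun i _ => ?_
    rw [show 2 * (n + i) + 2 = 2 * n + 1 + (2 * i + 1) by ring, pow_add]; ring
  rw [two_mul, prod_range_add, ← two_mul, hlow, hhigh, prod_mul_distrib, prod_mul_distrib,
    prod_mul_distrib, prod_range_reflect (fun i => 1 - q ^ (2 * i + 1)), prod_const, prod_const,
    card_range, prod_range_pow_two_mul_add_two]
  ring

end GaussianBinomial

section DvdSubOne

variable {M : Type*} [CommRing M] {a : M}

theorem dvd_mul_sub_one {x y : M} (hx : a ∣ x - 1) (hy : a ∣ y - 1) : a ∣ x * y - 1 := by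
  rw [show x * y - 1 = (x - 1) * y + (y - 1) by ring]
  exact dvd_add (dvd_mul_of_dvd_left hx y) hy

theorem dvd_prod_sub_one {ι : Type*} {s : Finset ι} {f : ι → M} (h : ∀ i ∈ s, a ∣ f i - 1) :
    a ∣ ∏ i ∈ s, f i - 1 :=
  prod_induction f (fun x => a ∣ x - 1) (fun _ _ => dvd_mul_sub_one) (by simp) h

theorem pow_dvd_prod_Ico_one_sub_pow_sub_one (q : M) {k m n : ℕ} (h : k ≤ m) :
    q ^ (k + 1) ∣ ∏ i ∈ Ico m n, (1 - q ^ (i + 1)) - 1 :=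
  dvd_prod_sub_one fun i hi => by
    rw [sub_sub_cancel_left, dvd_neg]
    exact pow_dvd_pow q (by have := (mem_Ico.1 hi).1; omega)

end DvdSubOne

section Theta

variable {R : Type*} [CommRing R]

theorem isUnit_qPochhammer {Y : R⟦X⟧} (hY : constantCoeff Y = 0) (n : ℕ) :
    IsUnit (qPochhammer Y n) := by
  simp [isUnit_iff_constantCoeff, qPochhammer, hY]

theorem pow_dvd_mul_qPochhammer_sub_one {Y : R⟦X⟧} (hY : constantCoeff Y = 0) {b : R⟦X⟧}
    {k l n : ℕ} (hb : b * qPochhammer Y k * qPochhammer Y l = qPochhammer Y (l + k))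
    (hkl : k ≤ l) (hkn : k ≤ n) : Y ^ (k + 1) ∣ b * qPochhammer Y n - 1 := by
  have hT : b * qPochhammer Y k = ∏ i ∈ Ico l (l + k), (1 - Y ^ (i + 1)) := by
    refine (isUnit_qPochhammer hY l).mul_right_cancel ?_
    rw [hb, qPochhammer, qPochhammer, ← prod_range_mul_prod_Ico _ (Nat.le_add_right l k), mul_comm]
  rw [qPochhammer, ← prod_range_mul_prod_Ico _ hkn, ← mul_assoc, ← qPochhammer, hT]
  exact dvd_mul_sub_one (pow_dvd_prod_Ico_one_sub_pow_sub_one Y hkl)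
    (pow_dvd_prod_Ico_one_sub_pow_sub_one Y le_rfl)

-- A finite form of Euler's `∏ (1 + qⁿ) = 1 / ∏ (1 - q^(2n-1))`.
theorem prod_odd_mul_prod_one_add_pow (n : ℕ) :
    (∏ i ∈ range n, (1 - (X : R⟦X⟧) ^ (2 * i + 1))) * ∏ i ∈ range n, (1 + X ^ (i + 1)) =
      ∏ i ∈ Ico n (2 * n), (1 - X ^ (i + 1)) := by
  refine (isUnit_qPochhammer (by simp : constantCoeff (X : R⟦X⟧) = 0) n).mul_right_cancel ?_
  calc _ = (∏ i ∈ range n, (1 - (X : R⟦X⟧) ^ (2 * i + 1))) *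
        (qPochhammer X n * ∏ i ∈ range n, (1 + X ^ (i + 1))) := by ring
    _ = qPochhammer X (2 * n) := by rw [qPochhammer_mul_prod_one_add_pow, qPochhammer_two_mul]
    _ = _ := by
      rw [qPochhammer, qPochhammer, ← prod_range_mul_prod_Ico _ (by omega : n ≤ 2 * n), mul_comm]

theorem sum_antidiagonal_two_mul_eq_sum_Icc {M : Type*} [AddCommMonoid M] (n : ℕ) (f : ℤ → M) :
    ∑ p ∈ antidiagonal (2 * n), f (p.1 - n) = ∑ j ∈ Icc (-(n : ℤ)) n, f j := by
  refine sum_nbij' (fun p => (p.1 : ℤ) - n) (fun j => ((n + j).toNat, (n - j).toNat)) ?_ ?_ ?_ ?_ ?_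
  all_goals intro p hp
  all_goals simp only [HasAntidiagonal.mem_antidiagonal, mem_Icc] at hp ⊢
  all_goals try (ext <;> simp)
  all_goals omega

theorem two_mul_choose_two_add_self (k : ℕ) : 2 * k.choose 2 + k = k ^ 2 := by
  induction k with
  | zero => rfl
  | succ k ih => rw [Nat.choose_succ_succ', Nat.choose_one_right]; linarith

noncomputable def qBinomThetaTerm (n : ℕ) (j : ℤ) : R⟦X⟧ :=
  (-1) ^ j.natAbs * X ^ (j.natAbs ^ 2) * qBinom (X ^ 2) (2 * n) (n + j).toNat

noncomputable def qBinomThetaSum (n : ℕ) : R⟦X⟧ := ∑ j ∈ Icc (-(n : ℤ)) n, qBinomThetaTerm n j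

theorem rothe_summand_eq (n k l : ℕ) (h : k + l = 2 * n) :
    ((X : R⟦X⟧) ^ 2) ^ k.choose 2 * qBinom (X ^ 2) (2 * n) k * (X ^ (2 * n + 1)) ^ l *
      (-X ^ 2) ^ k =
      (-1) ^ n * X ^ (3 * n ^ 2 + 2 * n) * qBinomThetaTerm n ((k : ℤ) - n) := by
  have hk := two_mul_choose_two_add_self k
  rw [qBinomThetaTerm, show (n + ((k : ℤ) - n)).toNat = k by omega, neg_pow, ← pow_mul, ← pow_mul,
    ← pow_mul]
  have hsq : ∀ d : ℕ, ((-1 : R⟦X⟧) ^ d) * (-1) ^ d = 1 := fun d => by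
    rw [← mul_pow, neg_one_mul, neg_neg, one_pow]
  rcases le_total k n with hkn | hnk
  · obtain ⟨d, rfl⟩ := Nat.exists_eq_add_of_le hkn
    obtain rfl : l = k + 2 * d := by omega
    rw [show ((k : ℤ) - (k + d : ℕ)).natAbs = d by omega]
    have e : 2 * k.choose 2 + (2 * (k + d) + 1) * (k + 2 * d) + 2 * k =
        3 * (k + d) ^ 2 + 2 * (k + d) + d ^ 2 := by nlinarith
    calc _ = (-1 : R⟦X⟧) ^ k * X ^ (2 * k.choose 2 + (2 * (k + d) + 1) * (k + 2 * d) + 2 * k) *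
          qBinom (X ^ 2) (2 * (k + d)) k := by ring
      _ = _ := by
        rw [e]
        linear_combination (-((-1) ^ k * X ^ (3 * (k + d) ^ 2 + 2 * (k + d) + d ^ 2) *
          qBinom (X ^ 2) (2 * (k + d)) k : R⟦X⟧)) * hsq d
  · obtain ⟨d, rfl⟩ := Nat.exists_eq_add_of_le hnk
    obtain rfl : n = l + d := by omega
    rw [show ((l + d + d : ℕ) - ((l + d : ℕ) : ℤ)).natAbs = d by omega]
    have e : 2 * (l + d + d).choose 2 + (2 * (l + d) + 1) * l + 2 * (l + d + d) =
        3 * (l + d) ^ 2 + 2 * (l + d) + d ^ 2 := by nlinarith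
    calc _ = (-1 : R⟦X⟧) ^ (l + d + d) * X ^ (2 * (l + d + d).choose 2 + (2 * (l + d) + 1) * l +
          2 * (l + d + d)) * qBinom (X ^ 2) (2 * (l + d)) (l + d + d) := by ring
      _ = _ := by
        rw [e]
        ring

theorem qBinomThetaSum_eq (n : ℕ) :
    (qBinomThetaSum n : R⟦X⟧) = (∏ i ∈ range n, (1 - X ^ (2 * i + 1))) ^ 2 := by
  have h := prod_add_pow_mul_eq_sum_qBinom (X ^ 2 : R⟦X⟧) (2 * n) (X ^ (2 * n + 1)) (-X ^ 2)
  have hprod : ∀ i, (X : R⟦X⟧) ^ (2 * n + 1) + (X ^ 2) ^ i * -X ^ 2 =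
      X ^ (2 * n + 1) - X ^ (2 * i + 2) := fun i => by ring
  simp only [hprod] at h
  rw [prod_range_two_mul_pow_sub_pow, sum_congr rfl fun p hp =>
      rothe_summand_eq n p.1 p.2 (HasAntidiagonal.mem_antidiagonal.1 hp), ← mul_sum,
    sum_antidiagonal_two_mul_eq_sum_Icc n (qBinomThetaTerm n), mul_assoc, mul_assoc] at h
  exact (X_pow_mul_cancel ((isUnit_neg_one.pow n).mul_left_cancel h)).symm

theorem qBinom_central_mul_qPochhammer {q : R} {n : ℕ} {j : ℤ} (hj : j ∈ Icc (-(n : ℤ)) n) :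
    qBinom q (2 * n) (n + j).toNat * qPochhammer q (n - j.natAbs) * qPochhammer q (n + j.natAbs) =
      qPochhammer q (n + j.natAbs + (n - j.natAbs)) := by
  have hj' := mem_Icc.1 hj
  rcases le_total 0 j with h | h
  · rw [show (n + j).toNat = n + j.natAbs by omega, mul_right_comm,
      show 2 * n = n - j.natAbs + (n + j.natAbs) by omega, add_comm (n + _)]
    exact qBinom_mul_qPochhammer_mul_qPochhammer q _ _
  · rw [show (n + j).toNat = n - j.natAbs by omega,
      show 2 * n = n + j.natAbs + (n - j.natAbs) by omega]
    exact qBinom_mul_qPochhammer_mul_qPochhammer q _ _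

variable (R) in
/-- `θ(-q) = ∑_{j ∈ ℤ} (-1)^j q^{j²}`. -/
noncomputable def thetaSeries : R⟦X⟧ :=
  mk fun m => ∑ j ∈ Icc (-(m : ℤ)) m, if j.natAbs ^ 2 = m then (-1) ^ j.natAbs else 0

theorem coeff_qBinomThetaTerm_mul_qPochhammer {m n : ℕ} {j : ℤ} (hj : j ∈ Icc (-(n : ℤ)) n)
    (hmn : m ≤ n) : coeff m (qBinomThetaTerm n j * qPochhammer (X ^ 2) n : R⟦X⟧) =
      if j.natAbs ^ 2 = m then (-1) ^ j.natAbs else 0 := by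
  rw [qBinomThetaTerm]
  set d := j.natAbs
  have hd : d ≤ n := by have := mem_Icc.1 hj; omega
  have hlt : ¬ d ^ 2 + 2 * (n - d + 1) ≤ m := by have := Nat.le_self_pow two_ne_zero d; omega
  obtain ⟨H, hH⟩ := pow_dvd_mul_qPochhammer_sub_one (by simp : constantCoeff (X ^ 2 : R⟦X⟧) = 0)
    (qBinom_central_mul_qPochhammer hj) (by omega) (by omega : n - d ≤ n)
  have hC : (-1 : R⟦X⟧) ^ d = C ((-1) ^ d) := by simp
  rw [mul_assoc _ (qBinom _ _ _), sub_eq_iff_eq_add.1 hH, ← pow_mul, hC, mul_assoc, coeff_C_mul,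
    mul_add, mul_one, ← mul_assoc, ← pow_add, map_add, coeff_X_pow_mul', if_neg hlt, zero_add,
    coeff_X_pow]
  simp [eq_comm]

theorem coeff_qBinomThetaSum_mul_qPochhammer {m n : ℕ} (hmn : m ≤ n) :
    coeff m (qBinomThetaSum n * qPochhammer (X ^ 2) n : R⟦X⟧) = coeff m (thetaSeries R) := by
  rw [qBinomThetaSum, sum_mul, map_sum,
    sum_congr rfl fun j hj => coeff_qBinomThetaTerm_mul_qPochhammer hj hmn, thetaSeries, coeff_mk]
  refine (sum_subset (Icc_subset_Icc (by omega) (by omega)) fun j _ hj => if_neg ?_).symm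
  intro hjm
  have := Nat.le_self_pow two_ne_zero j.natAbs
  exact hj (mem_Icc.2 (by omega))

end Theta

section GeneratingFunction

variable (R : Type*) [CommRing R]

noncomputable def overpartitionSeries : R⟦X⟧ := mk fun n => (Nat.card (Overpartitions n) : R)

/-- Every distinct part size contributes a factor `2`: overlined or not. -/
theorem overpartitionSeries_eq_genFun :
    overpartitionSeries R = Nat.Partition.genFun fun _ _ => (2 : R) := by
  ext n
  simp [overpartitionSeries, card_overpartitions, Finsupp.prod, Multiset.toFinsupp_support]

open PowerSeries.WithPiTopology

variable [TopologicalSpace R]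

theorem hasProd_overpartitionSeries [T2Space R] :
    HasProd (fun i => 1 + ∑' j, (2 : R) • (X : R⟦X⟧) ^ ((i + 1) * (j + 1)))
      (overpartitionSeries R) := by
  rw [overpartitionSeries_eq_genFun]
  exact Nat.Partition.hasProd_genFun (fun _ _ => (2 : R))

variable {R}

theorem one_add_tsum_two_smul_mul_one_sub_X_pow [IsTopologicalRing R] [T2Space R] {k : ℕ}
    (hk : k ≠ 0) :
    (1 + ∑' j, (2 : R) • (X : R⟦X⟧) ^ (k * (j + 1))) * (1 - X ^ k) = 1 + X ^ k := by
  have hX : constantCoeff ((X : R⟦X⟧) ^ k) = 0 := by simp [hk]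
  have hsum : ∑' j, (2 : R) • (X : R⟦X⟧) ^ (k * (j + 1)) = 2 * X ^ k * ∑' j, (X ^ k) ^ j := by
    rw [← (summable_pow_of_constantCoeff_eq_zero hX).tsum_mul_left]
    congr 1; ext1 j; rw [smul_eq_C_mul, map_ofNat, mul_add, mul_one, pow_add, pow_mul]; ring
  rw [hsum]
  linear_combination (2 * X ^ k : R⟦X⟧) * tsum_pow_mul_one_sub_of_constantCoeff_eq_zero hX

theorem tendsto_of_X_pow_dvd_sub {f : ℕ → R⟦X⟧} {g : R⟦X⟧} (h : ∀ n, X ^ (n + 1) ∣ f n - g) :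
    Tendsto f atTop (𝓝 g) := by
  refine (tendsto_iff_coeff_tendsto _ _ _ _).2 fun m =>
    tendsto_atTop_of_eventually_const (i₀ := m) fun n hn => ?_
  rw [← sub_eq_zero, ← map_sub]
  exact X_pow_dvd_iff.1 (h n) m (by omega)

end GeneratingFunction

open PowerSeries.WithPiTopology in
theorem thetaSeries_mul_overpartitionSeries (R : Type*) [CommRing R] :
    thetaSeries R * overpartitionSeries R = 1 := by
  -- The claim is topology-free; limits are taken coefficientwise, i.e. for the discrete topology.
  let _ : TopologicalSpace R := ⊥
  have _ : DiscreteTopology R := ⟨rfl⟩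
  have hF : ∀ n, qPochhammer (X : R⟦X⟧) n *
      ∏ i ∈ range n, (1 + ∑' j, (2 : R) • (X : R⟦X⟧) ^ ((i + 1) * (j + 1))) =
      ∏ i ∈ range n, (1 + X ^ (i + 1)) := fun n => by
    rw [qPochhammer, ← prod_mul_distrib]
    refine prod_congr rfl fun i _ => ?_
    rw [mul_comm]
    exact one_add_tsum_two_smul_mul_one_sub_X_pow i.succ_ne_zero
  have hθ : Tendsto (fun n => qBinomThetaSum n * qPochhammer (X ^ 2) n) atTop (𝓝 (thetaSeries R)) :=
    tendsto_of_X_pow_dvd_sub fun n => X_pow_dvd_iff.2 fun m hm => by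
      rw [map_sub, coeff_qBinomThetaSum_mul_qPochhammer (by omega), sub_self]
  have hO := (hasProd_overpartitionSeries R).tendsto_prod_nat
  refine tendsto_nhds_unique (hθ.mul hO) (tendsto_of_X_pow_dvd_sub fun n => ?_)
  -- The `n`-th partial product is `(∏_{n ≤ i < 2n} (1 - X^(i+1)))²`.
  have hW := pow_dvd_prod_Ico_one_sub_pow_sub_one (X : R⟦X⟧) (n := 2 * n) (le_refl n)
  convert dvd_mul_sub_one hW hW using 2
  rw [qBinomThetaSum_eq, ← qPochhammer_mul_prod_one_add_pow, ← prod_odd_mul_prod_one_add_pow]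
  linear_combination ((∏ i ∈ range n, (1 - X ^ (2 * i + 1))) ^ 2 *
    ∏ i ∈ range n, (1 + X ^ (i + 1)) : R⟦X⟧) * hF n

theorem coeff_pow_eq_zero_of_not_dvd {R : Type*} [CommRing R] {p : ℕ} [ExpChar R p]
    (f : R⟦X⟧) {j : ℕ} (hj : ¬ p ∣ j) : coeff j (f ^ p) = 0 := by
  have hp : p ≠ 0 := expChar_ne_zero R p
  -- `f ^ p` is `f (X ^ p)` with Frobenius applied to the coefficients.
  rw [← MvPowerSeries.map_frobenius_expand p hp]
  change coeff j (PowerSeries.map (frobenius R p) (PowerSeries.expand p hp f)) = 0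
  rw [coeff_map, coeff_expand_of_not_dvd p hp f hj, map_zero]

theorem coeff_thetaSeries_eq_zero_of_mod_three {R : Type*} [CommRing R] {m : ℕ} (hm : m % 3 = 2) :
    coeff m (thetaSeries R) = 0 := by
  refine (coeff_mk _ _).trans (sum_eq_zero fun j _ => if_neg fun h => ?_)
  have : j.natAbs % 3 = 0 ∨ j.natAbs % 3 = 1 ∨ j.natAbs % 3 = 2 := by omega
  rcases this with h3 | h3 | h3 <;> simp [← h, Nat.pow_mod, h3] at hm

theorem coeff_pow_three_mul_thetaSeries_eq_zero {R : Type*} [CommRing R] [ExpChar R 3]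
    (f : R⟦X⟧) {m : ℕ} (hm : m % 3 = 2) : coeff m (f ^ 3 * thetaSeries R) = 0 := by
  refine (coeff_mul _ _ _).trans (sum_eq_zero fun ab hab => ?_)
  rw [HasAntidiagonal.mem_antidiagonal] at hab
  by_cases h : 3 ∣ ab.1
  · rw [coeff_thetaSeries_eq_zero_of_mod_three (by omega), mul_zero]
  · rw [coeff_pow_eq_zero_of_not_dvd f h, zero_mul]

theorem coeff_overpartitionSeries_mul_self (R : Type*) [CommRing R] (N : ℕ) :
    coeff N (overpartitionSeries R * overpartitionSeries R) =
      Nat.card {x : (Multiset ℕ × Finset ℕ) × (Multiset ℕ × Finset ℕ) //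
        IsOverpartition x.1 ∧ IsOverpartition x.2 ∧ x.1.1.sum + x.2.1.sum = N} := by
  simp [coeff_mul, overpartitionSeries, card_overpartition_pairs]

theorem overpartition_pair_congruence (n : ℕ) :
    3 ∣ Nat.card {x : (Multiset ℕ × Finset ℕ) × (Multiset ℕ × Finset ℕ) //
      IsOverpartition x.1 ∧ IsOverpartition x.2 ∧ x.1.1.sum + x.2.1.sum = 3 * n + 2} := by
  rw [← ZMod.natCast_eq_zero_iff, ← coeff_overpartitionSeries_mul_self]
  set P := overpartitionSeries (ZMod 3)
  have hP : P * P = P ^ 3 * thetaSeries (ZMod 3) := by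
    linear_combination (-P ^ 2) * thetaSeries_mul_overpartitionSeries (ZMod 3)
  rw [hP]
  exact coeff_pow_three_mul_thetaSeries_eq_zero P (by omega)
end

section
/- The number of partitions of n equals the number of triples (μ, α, β) where μ is a staircase partition, α and β are partitions into even parts, and |μ| + |α| + |β| = n. -/
/-!
Pad a partition with zeros to `N` parts `a₀ ≤ a₁ ≤ ⋯ ≤ a_{N-1}`; its beta-set `{aᵢ + i}` is a set
of `N` naturals whose sum exceeds the size of the partition by `N.choose 2`, and every such set
arises exactly once. For `N = 2M`, split the beta-set into its even and odd elements and halve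
them: this yields two beta-sets with `M - e` and `M + e` elements, that is, two partitions `γ, δ`
(the 2-quotient) together with a charge `e ∈ ℤ`, and the size becomes `e(2e+1) + 2|γ| + 2|δ|`.
As `e` runs through `ℤ`, `e(2e+1)` runs once through the triangular numbers, the sizes of the
staircases (the 2-cores), while `2γ` and `2δ` run through the partitions into even parts.
-/

open Finset

namespace PartitionTwoQuotient

def raise : ℕ → List ℕ → List ℕ
  | _, [] => []
  | k, a :: l => (a + k) :: raise (k + 1) l

def lower : ℕ → List ℕ → List ℕ
  | _, [] => []
  | k, a :: l => (a - k) :: lower (k + 1) l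

@[simp] lemma length_raise (k : ℕ) (l : List ℕ) : (raise k l).length = l.length := by
  induction l generalizing k <;> simp [raise, *]

@[simp] lemma length_lower (k : ℕ) (l : List ℕ) : (lower k l).length = l.length := by
  induction l generalizing k <;> simp [lower, *]

lemma sum_raise (k : ℕ) (l : List ℕ) :
    (raise k l).sum = l.sum + l.length * k + l.length.choose 2 := by
  induction l generalizing k with
  | nil => simp [raise]
  | cons a l ih =>
    simp only [raise, List.sum_cons, ih, List.length_cons, Nat.choose_succ_succ',
      Nat.choose_one_right]
    ring

lemma lower_raise (k : ℕ) (l : List ℕ) : lower k (raise k l) = l := by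
  induction l generalizing k <;> simp [raise, lower, *]

lemma raise_lower {k : ℕ} {l : List ℕ} (hl : l.Pairwise (· < ·)) (hk : ∀ a ∈ l, k ≤ a) :
    raise k (lower k l) = l := by
  induction l generalizing k with
  | nil => rfl
  | cons a l ih =>
    rw [List.pairwise_cons] at hl
    have hka := hk a List.mem_cons_self
    simp only [lower, raise, Nat.sub_add_cancel hka,
      ih hl.2 fun b hb => (hl.1 b hb).trans_le' hka]

lemma add_le_of_mem_raise {c k : ℕ} {l : List ℕ} (hl : ∀ a ∈ l, c ≤ a) :
    ∀ b ∈ raise k l, c + k ≤ b := by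
  induction l generalizing k with
  | nil => simp [raise]
  | cons a l ih =>
    simp only [raise, List.mem_cons, forall_eq_or_imp]
    refine ⟨by have := hl a List.mem_cons_self; omega, fun b hb => ?_⟩
    have := ih (fun b hb => hl b (List.mem_cons_of_mem a hb)) b hb
    omega

lemma pairwise_lt_raise (k : ℕ) {l : List ℕ} (hl : l.Pairwise (· ≤ ·)) :
    (raise k l).Pairwise (· < ·) := by
  induction l generalizing k with
  | nil => simp [raise]
  | cons a l ih =>
    rw [List.pairwise_cons] at hl
    refine List.pairwise_cons.2 ⟨fun b hb => ?_, ih (k + 1) hl.2⟩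
    have := add_le_of_mem_raise hl.1 b hb
    omega

lemma le_of_mem_lower {c k : ℕ} {l : List ℕ} (hl : l.Pairwise (· < ·))
    (hc : ∀ a ∈ l, c + k ≤ a) : ∀ b ∈ lower k l, c ≤ b := by
  induction l generalizing k with
  | nil => simp [lower]
  | cons a l ih =>
    rw [List.pairwise_cons] at hl
    have hca := hc a List.mem_cons_self
    simp only [lower, List.mem_cons, forall_eq_or_imp]
    exact ⟨by omega, ih hl.2 fun b hb => by have := hl.1 b hb; omega⟩

lemma pairwise_le_lower {k : ℕ} {l : List ℕ} (hl : l.Pairwise (· < ·))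
    (hk : ∀ a ∈ l, k ≤ a) :
    (lower k l).Pairwise (· ≤ ·) := by
  induction l generalizing k with
  | nil => simp [lower]
  | cons a l ih =>
    rw [List.pairwise_cons] at hl
    have hka := hk a List.mem_cons_self
    refine List.pairwise_cons.2
      ⟨le_of_mem_lower hl.2 fun b hb => ?_, ih hl.2 fun b hb => ?_⟩ <;>
    · have := hl.1 b hb; omega

lemma card_le_sum_of_isPartitionM {m : Multiset ℕ} (hm : IsPartitionM m) :
    Multiset.card m ≤ m.sum := by
  simpa using Multiset.card_nsmul_le_sum hm

def padZeros (N : ℕ) (m : Multiset ℕ) : Multiset ℕ :=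
  m + Multiset.replicate (N - Multiset.card m) 0

lemma card_padZeros {N : ℕ} {m : Multiset ℕ} (h : Multiset.card m ≤ N) :
    Multiset.card (padZeros N m) = N := by
  simp only [padZeros, Multiset.card_add, Multiset.card_replicate]
  omega

lemma filter_pos_padZeros (N : ℕ) {m : Multiset ℕ} (hm : IsPartitionM m) :
    (padZeros N m).filter (0 < ·) = m := by
  simp +contextual [padZeros, Multiset.filter_add, Multiset.filter_eq_self.2 hm,
    Multiset.filter_eq_nil, Multiset.mem_replicate]

lemma padZeros_filter_pos (s : Multiset ℕ) :
    padZeros (Multiset.card s) (s.filter (0 < ·)) = s := by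
  have hzeros : s.filter (¬0 < ·) = Multiset.replicate (Multiset.card (s.filter (¬0 < ·))) 0 :=
    Multiset.eq_replicate_card.2 fun a ha => by simpa using (Multiset.mem_filter.1 ha).2
  have hcard := congrArg Multiset.card (Multiset.filter_add_not (0 < ·) s)
  rw [Multiset.card_add] at hcard
  conv_rhs => rw [← Multiset.filter_add_not (0 < ·) s, hzeros]
  rw [padZeros]
  congr 2
  omega

def betaSet (N : ℕ) (m : Multiset ℕ) : Finset ℕ :=
  (raise 0 (padZeros N m).sort).toFinset

def ofBetaSet (B : Finset ℕ) : Multiset ℕ :=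
  (lower 0 B.sort : Multiset ℕ).filter (0 < ·)

lemma sort_betaSet (N : ℕ) (m : Multiset ℕ) :
    (betaSet N m).sort = raise 0 (padZeros N m).sort :=
  (List.toFinset_sort _ (pairwise_lt_raise 0 (Multiset.pairwise_sort _ _)).nodup).2
    ((pairwise_lt_raise 0 (Multiset.pairwise_sort _ _)).imp le_of_lt)

lemma card_betaSet {N : ℕ} {m : Multiset ℕ} (h : Multiset.card m ≤ N) :
    #(betaSet N m) = N := by
  rw [← Finset.length_sort (· ≤ ·), sort_betaSet, length_raise, Multiset.length_sort,
    card_padZeros h]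

lemma sum_betaSet {N : ℕ} {m : Multiset ℕ} (h : Multiset.card m ≤ N) :
    ∑ b ∈ betaSet N m, b = m.sum + N.choose 2 := by
  rw [betaSet, List.sum_toFinset _ (pairwise_lt_raise 0 (Multiset.pairwise_sort _ _)).nodup,
    List.map_id', sum_raise, ← Multiset.sum_coe, Multiset.sort_eq, Multiset.length_sort,
    card_padZeros h, padZeros, Multiset.sum_add]
  simp

lemma isPartitionM_ofBetaSet (B : Finset ℕ) : IsPartitionM (ofBetaSet B) :=
  fun _ hi => (Multiset.mem_filter.1 hi).2

lemma card_ofBetaSet_le (B : Finset ℕ) : Multiset.card (ofBetaSet B) ≤ #B :=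
  (Multiset.card_le_card (Multiset.filter_le _ _)).trans (by simp)

lemma ofBetaSet_betaSet {N : ℕ} {m : Multiset ℕ} (hm : IsPartitionM m) :
    ofBetaSet (betaSet N m) = m := by
  rw [ofBetaSet, sort_betaSet, lower_raise, Multiset.sort_eq, filter_pos_padZeros N hm]

lemma betaSet_ofBetaSet (B : Finset ℕ) : betaSet #B (ofBetaSet B) = B := by
  have hB := (Finset.sortedLT_sort B).pairwise
  have hlower := pairwise_le_lower hB fun a _ => Nat.zero_le a
  have hcard : Multiset.card (lower 0 B.sort : Multiset ℕ) = #B := by simp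
  rw [betaSet, ofBetaSet, ← hcard, padZeros_filter_pos, Multiset.coe_sort,
    List.mergeSort_eq_self _ hlower, raise_lower hB fun a _ => Nat.zero_le a, Finset.sort_toFinset]

lemma sum_ofBetaSet (B : Finset ℕ) : (ofBetaSet B).sum + (#B).choose 2 = ∑ b ∈ B, b := by
  conv_rhs => rw [← betaSet_ofBetaSet B]
  rw [sum_betaSet (card_ofBetaSet_le B)]

def partitionEquivBetaSet (n N : ℕ) (hN : n ≤ N) :
    {m : Multiset ℕ // IsPartitionM m ∧ m.sum = n} ≃
      {B : Finset ℕ // #B = N ∧ ∑ b ∈ B, b = n + N.choose 2} where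
  toFun m :=
    have hcard : Multiset.card m.1 ≤ N :=
      (card_le_sum_of_isPartitionM m.2.1).trans (m.2.2.symm ▸ hN)
    ⟨betaSet N m.1, card_betaSet hcard, by rw [sum_betaSet hcard, m.2.2]⟩
  invFun B := ⟨ofBetaSet B.1, isPartitionM_ofBetaSet B.1, by
    have := sum_ofBetaSet B.1
    rw [B.2.1, B.2.2] at this
    omega⟩
  left_inv m := Subtype.ext (ofBetaSet_betaSet m.2.1)
  right_inv B := Subtype.ext (B.2.1 ▸ betaSet_ofBetaSet B.1)

def evenOddEquiv : Finset ℕ ≃ Finset ℕ × Finset ℕ :=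
  (Equiv.finsetCongr Equiv.natSumNatEquivNat.symm).trans Finset.sumEquiv.toEquiv

lemma evenOddEquiv_symm_apply (p : Finset ℕ × Finset ℕ) :
    evenOddEquiv.symm p = (p.1.disjSum p.2).map Equiv.natSumNatEquivNat.toEmbedding :=
  rfl

lemma card_evenOddEquiv_symm (p : Finset ℕ × Finset ℕ) :
    #(evenOddEquiv.symm p) = #p.1 + #p.2 := by
  simp [evenOddEquiv_symm_apply]

lemma sum_evenOddEquiv_symm (p : Finset ℕ × Finset ℕ) :
    ∑ b ∈ evenOddEquiv.symm p, b = 2 * ∑ x ∈ p.1, x + 2 * ∑ y ∈ p.2, y + #p.2 := by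
  simp only [evenOddEquiv_symm_apply, sum_map, Function.Embedding.coeFn_mk,
    Equiv.natSumNatEquivNat_apply, sum_disjSum, Sum.elim_inl, Sum.elim_inr, sum_add_distrib,
    sum_const, smul_eq_mul, mul_one, mul_sum]
  ring

def betaSetEquivEvenOdd (N w : ℕ) :
    {B : Finset ℕ // #B = N ∧ ∑ b ∈ B, b = w} ≃
      {p : Finset ℕ × Finset ℕ // #p.1 + #p.2 = N ∧
        2 * ∑ x ∈ p.1, x + 2 * ∑ y ∈ p.2, y + #p.2 = w} :=
  (evenOddEquiv.symm.subtypeEquiv fun p => by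
    rw [card_evenOddEquiv_symm, sum_evenOddEquiv_symm]).symm

lemma two_mul_choose_two (N : ℕ) : 2 * (N.choose 2 : ℤ) = N * (N - 1) := by
  induction N with
  | zero => simp
  | succ N ih => push_cast [Nat.choose_succ_succ', Nat.choose_one_right]; linear_combination ih

lemma choose_two_add_choose_two {a b M : ℕ} (h : a + b = 2 * M) :
    (2 * a.choose 2 + 2 * b.choose 2 + b : ℤ) =
      (2 * M).choose 2 + (b - M) * (2 * (b - M) + 1) := by
  have ha := two_mul_choose_two a
  have hb := two_mul_choose_two b
  have hM := two_mul_choose_two (2 * M)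
  have h' : (a : ℤ) = 2 * M - b := by omega
  push_cast at hM
  rw [h'] at ha
  linarith

lemma abs_le_mul_two_mul_add_one (e : ℤ) : |e| ≤ e * (2 * e + 1) := by
  rcases abs_cases e with ⟨he, h⟩ | ⟨he, h⟩ <;> rw [he] <;> nlinarith

lemma card_le_of_weight_eq {n M : ℕ} {e : ℤ} {γ δ : Multiset ℕ} (hγ : IsPartitionM γ)
    (hδ : IsPartitionM δ) (hw : e * (2 * e + 1) + 2 * (γ.sum : ℤ) + 2 * δ.sum = n)
    (hM : n ≤ M) :
    (Multiset.card γ : ℤ) ≤ M - e ∧ (Multiset.card δ : ℤ) ≤ M + e := by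
  have hγs : (Multiset.card γ : ℤ) ≤ γ.sum := mod_cast card_le_sum_of_isPartitionM hγ
  have hδs : (Multiset.card δ : ℤ) ≤ δ.sum := mod_cast card_le_sum_of_isPartitionM hδ
  have hM' : (n : ℤ) ≤ M := mod_cast hM
  have hγ0 : (0 : ℤ) ≤ Multiset.card γ := Nat.cast_nonneg _
  have hδ0 : (0 : ℤ) ≤ Multiset.card δ := Nat.cast_nonneg _
  have := abs_le_mul_two_mul_add_one e
  constructor <;> linarith [le_abs_self e, neg_abs_le e]

def evenOddEquivChargeQuotient (n M : ℕ) (hM : n ≤ M) :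
    {p : Finset ℕ × Finset ℕ // #p.1 + #p.2 = 2 * M ∧
      2 * ∑ x ∈ p.1, x + 2 * ∑ y ∈ p.2, y + #p.2 = n + (2 * M).choose 2} ≃
    {t : ℤ × Multiset ℕ × Multiset ℕ // IsPartitionM t.2.1 ∧ IsPartitionM t.2.2 ∧
      t.1 * (2 * t.1 + 1) + 2 * (t.2.1.sum : ℤ) + 2 * t.2.2.sum = n} where
  toFun p := ⟨((#p.1.2 : ℤ) - M, ofBetaSet p.1.1, ofBetaSet p.1.2),
    isPartitionM_ofBetaSet _, isPartitionM_ofBetaSet _, by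
      obtain ⟨⟨X, Y⟩, hcard, hsum⟩ := p
      dsimp only at hcard hsum ⊢
      have hX : ((ofBetaSet X).sum : ℤ) + (#X).choose 2 = (∑ x ∈ X, x : ℕ) := by
        rw [← Nat.cast_add, sum_ofBetaSet]
      have hY : ((ofBetaSet Y).sum : ℤ) + (#Y).choose 2 = (∑ y ∈ Y, y : ℕ) := by
        rw [← Nat.cast_add, sum_ofBetaSet]
      have hsum' : (2 * (∑ x ∈ X, x : ℕ) + 2 * (∑ y ∈ Y, y : ℕ) + #Y : ℤ) =
          n + (2 * M).choose 2 := by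
        exact_mod_cast hsum
      linarith [choose_two_add_choose_two hcard]⟩
  invFun t := ⟨(betaSet (M - t.1.1).toNat t.1.2.1, betaSet (M + t.1.1).toNat t.1.2.2), by
    obtain ⟨⟨e, γ, δ⟩, hγ, hδ, hw⟩ := t
    dsimp only at hγ hδ hw ⊢
    obtain ⟨hγM, hδM⟩ := card_le_of_weight_eq hγ hδ hw hM
    have hγ' : Multiset.card γ ≤ (M - e).toNat := by omega
    have hδ' : Multiset.card δ ≤ (M + e).toNat := by omega
    have hcard : (M - e).toNat + (M + e).toNat = 2 * M := by omega
    rw [card_betaSet hγ', card_betaSet hδ', sum_betaSet hγ', sum_betaSet hδ']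
    refine ⟨hcard, ?_⟩
    have key := choose_two_add_choose_two hcard
    have hb : ((M + e).toNat : ℤ) = M + e := Int.toNat_of_nonneg (by omega)
    rw [hb, add_sub_cancel_left] at key
    suffices h : (2 * (γ.sum + (M - e).toNat.choose 2) + 2 * (δ.sum + (M + e).toNat.choose 2) +
        (M + e).toNat : ℤ) = n + (2 * M).choose 2 by exact_mod_cast h
    linarith⟩
  left_inv p := by
    obtain ⟨⟨X, Y⟩, hcard, -⟩ := p
    dsimp only at hcard
    have hX : (M - ((#Y : ℤ) - M)).toNat = #X := by omega
    have hY : (M + ((#Y : ℤ) - M)).toNat = #Y := by omega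
    ext1
    simp only [hX, hY, betaSet_ofBetaSet]
  right_inv t := by
    obtain ⟨⟨e, γ, δ⟩, hγ, hδ, hw⟩ := t
    dsimp only at hγ hδ hw
    obtain ⟨hγM, hδM⟩ := card_le_of_weight_eq hγ hδ hw hM
    have hδ' : Multiset.card δ ≤ (M + e).toNat := by omega
    ext1
    simp only [card_betaSet hδ', ofBetaSet_betaSet hγ, ofBetaSet_betaSet hδ]
    congr 1
    omega

def staircase (k : ℕ) : Multiset ℕ := (Multiset.range k).map (· + 1)

lemma card_staircase (k : ℕ) : Multiset.card (staircase k) = k := by simp [staircase]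

lemma sum_staircase (k : ℕ) : (staircase k).sum = (k + 1).choose 2 := by
  induction k with
  | zero => simp [staircase]
  | succ k ih =>
    rw [staircase, Multiset.range_succ, Multiset.map_cons, Multiset.sum_cons, ← staircase, ih,
      Nat.choose_succ_succ' (k + 1), Nat.choose_one_right, add_comm]

lemma intEquivNat_natCast (j : ℕ) : Equiv.intEquivNat j = 2 * j := rfl

lemma intEquivNat_negSucc (j : ℕ) : Equiv.intEquivNat (Int.negSucc j) = 2 * j + 1 := rfl

-- `intEquivNat` sends `e ≥ 0` to `2e` and `e < 0` to `-2e - 1`; in both cases the staircase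
-- has size `e(2e+1)`.
def chargeStaircaseEquiv : ℤ ≃ {μ : Multiset ℕ // IsStaircase μ} where
  toFun e := ⟨staircase (Equiv.intEquivNat e), _, rfl⟩
  invFun μ := Equiv.intEquivNat.symm (Multiset.card μ.1)
  left_inv e := by simp [card_staircase]
  right_inv := by
    rintro ⟨_, k, rfl⟩
    exact Subtype.ext (by simp [staircase])

lemma sum_chargeStaircaseEquiv (e : ℤ) :
    ((chargeStaircaseEquiv e : Multiset ℕ).sum : ℤ) = e * (2 * e + 1) := by
  change ((staircase (Equiv.intEquivNat e)).sum : ℤ) = _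
  have := two_mul_choose_two (Equiv.intEquivNat e + 1)
  rw [sum_staircase]
  cases e with
  | ofNat j =>
    rw [Int.ofNat_eq_natCast, intEquivNat_natCast] at *
    push_cast at this ⊢
    linarith
  | negSucc j =>
    rw [intEquivNat_negSucc] at *
    push_cast [Int.negSucc_eq] at this ⊢
    linarith

def doubleEquiv :
    {γ : Multiset ℕ // IsPartitionM γ} ≃ {α : Multiset ℕ // IsEvenPartition α} where
  toFun γ := ⟨γ.1.map (2 * ·), by
    refine ⟨fun a ha => ?_, fun a ha => ?_⟩ <;> obtain ⟨b, hb, rfl⟩ := Multiset.mem_map.1 ha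
    · exact Nat.mul_pos two_pos (γ.2 b hb)
    · exact even_two_mul b⟩
  invFun α := ⟨α.1.map (· / 2), fun a ha => by
    obtain ⟨b, hb, rfl⟩ := Multiset.mem_map.1 ha
    obtain ⟨c, rfl⟩ := α.2.2 b hb
    have := α.2.1 _ hb
    omega⟩
  left_inv γ := Subtype.ext (by simp [Multiset.map_map])
  right_inv α := Subtype.ext (by
    show (α.1.map (· / 2)).map (2 * ·) = α.1
    conv_rhs => rw [← Multiset.map_id α.1]
    rw [Multiset.map_map]
    refine Multiset.map_congr rfl fun a ha => ?_
    obtain ⟨c, rfl⟩ := α.2.2 a ha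
    simp only [Function.comp_apply, id]
    omega)

lemma sum_doubleEquiv (γ : {γ : Multiset ℕ // IsPartitionM γ}) :
    (doubleEquiv γ : Multiset ℕ).sum = 2 * (γ : Multiset ℕ).sum := by
  show (γ.1.map (2 * ·)).sum = _
  rw [Multiset.sum_map_mul_left, Multiset.map_id']

def chargeQuotientEquivStaircaseEven (n : ℕ) :
    {t : ℤ × Multiset ℕ × Multiset ℕ // IsPartitionM t.2.1 ∧ IsPartitionM t.2.2 ∧
      t.1 * (2 * t.1 + 1) + 2 * (t.2.1.sum : ℤ) + 2 * t.2.2.sum = n} ≃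
    {t : Multiset ℕ × Multiset ℕ × Multiset ℕ //
      IsStaircase t.1 ∧ IsEvenPartition t.2.1 ∧ IsEvenPartition t.2.2 ∧
      t.1.sum + t.2.1.sum + t.2.2.sum = n} where
  toFun t :=
    ⟨(chargeStaircaseEquiv t.1.1, doubleEquiv ⟨_, t.2.1⟩, doubleEquiv ⟨_, t.2.2.1⟩),
      (chargeStaircaseEquiv _).2, (doubleEquiv _).2, (doubleEquiv _).2, by
        rw [sum_doubleEquiv, sum_doubleEquiv, ← Nat.cast_inj (R := ℤ)]
        simp only [Nat.cast_add, Nat.cast_mul, Nat.cast_ofNat, sum_chargeStaircaseEquiv]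
        exact t.2.2.2⟩
  invFun t := ⟨(chargeStaircaseEquiv.symm ⟨_, t.2.1⟩, doubleEquiv.symm ⟨_, t.2.2.1⟩,
      doubleEquiv.symm ⟨_, t.2.2.2.1⟩), (doubleEquiv.symm _).2, (doubleEquiv.symm _).2, by
    have hμ := sum_chargeStaircaseEquiv (chargeStaircaseEquiv.symm ⟨_, t.2.1⟩)
    have hα := sum_doubleEquiv (doubleEquiv.symm ⟨_, t.2.2.1⟩)
    have hβ := sum_doubleEquiv (doubleEquiv.symm ⟨_, t.2.2.2.1⟩)
    have hw := t.2.2.2.2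
    simp only [Equiv.apply_symm_apply] at hμ hα hβ
    simp only [hα, hβ, ← Nat.cast_inj (R := ℤ), Nat.cast_add, Nat.cast_mul, Nat.cast_ofNat,
      hμ] at hw
    exact hw⟩
  left_inv t := by simp
  right_inv t := by simp

end PartitionTwoQuotient

theorem partitions_eq_staircase_even_pairs (n : ℕ) :
    Nat.card {m : Multiset ℕ // IsPartitionM m ∧ m.sum = n} =
    Nat.card {t : Multiset ℕ × Multiset ℕ × Multiset ℕ //
      IsStaircase t.1 ∧ IsEvenPartition t.2.1 ∧ IsEvenPartition t.2.2 ∧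
      t.1.sum + t.2.1.sum + t.2.2.sum = n} :=
  Nat.card_congr <| (PartitionTwoQuotient.partitionEquivBetaSet n (2 * n) (by omega)).trans <|
    (PartitionTwoQuotient.betaSetEquivEvenOdd _ _).trans <|
      (PartitionTwoQuotient.evenOddEquivChargeQuotient n n le_rfl).trans <|
        PartitionTwoQuotient.chargeQuotientEquivStaircaseEven n
end

section
/- The number of partitions in which every part occurs at least twice and total size n equals the number of pairs (α, β) where α is a partition into even parts, β is a partition into distinct multiples of 3, and |α| + |β| = n. -/
/-!
A multiplicity `c` is either `0` or at least `2` exactly when `c = 2x + 3y` with `y ≤ 1`, and then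
`y` is the parity of `c` and `x = (c - 3y) / 2`. So the partitions with every multiplicity at least
`2` are exactly the multisets `2 • a + 3 • b` with `b` duplicate-free, each obtained once.
Doubling the parts of `a` and tripling those of `b` sends the same pairs `(a, b)` injectively onto
the pairs (even partition, distinct multiples of `3`), so both sides count these pairs.
-/

namespace Multiset

variable {α : Type*} [DecidableEq α]

lemma count_two_nsmul_add_three_nsmul (a b : Multiset α) (d : α) :
    count d (2 • a + 3 • b) = 2 * count d a + 3 * count d b := by
  simp only [count_add, count_nsmul]

lemma two_le_count_two_nsmul_add_three_nsmul (a b : Multiset α) :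
    ∀ d ∈ 2 • a + 3 • b, 2 ≤ count d (2 • a + 3 • b) := by
  intro d hd
  rw [← count_pos, count_two_nsmul_add_three_nsmul] at hd
  rw [count_two_nsmul_add_three_nsmul]
  omega

lemma injOn_two_nsmul_add_three_nsmul :
    Set.InjOn (fun p : Multiset α × Multiset α => 2 • p.1 + 3 • p.2) {p | p.2.Nodup} := by
  rintro ⟨a, b⟩ (hb : b.Nodup) ⟨a', b'⟩ (hb' : b'.Nodup) h
  have hcount (d : α) : 2 * count d a + 3 * count d b = 2 * count d a' + 3 * count d b' := by
    simpa only [count_two_nsmul_add_three_nsmul] using congr_arg (count d) h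
  have hb1 (d : α) := nodup_iff_count_le_one.1 hb d
  have hb1' (d : α) := nodup_iff_count_le_one.1 hb' d
  rw [Prod.mk.injEq, ext, ext]
  constructor <;>
    · intro d
      have := hcount d; have := hb1 d; have := hb1' d; omega

lemma exists_two_nsmul_add_three_nsmul_eq {m : Multiset α} (hm : ∀ d ∈ m, 2 ≤ count d m) :
    ∃ a b : Multiset α, b.Nodup ∧ 2 • a + 3 • b = m := by
  set b := m.dedup.filter fun d => Odd (count d m)
  have hcount_b (d : α) : count d b = if d ∈ m ∧ Odd (count d m) then 1 else 0 := by
    rw [count_filter, count_dedup]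
    split_ifs <;> simp_all
  have hle : 3 • b ≤ m := le_iff_count.2 fun d => by
    rw [count_nsmul, hcount_b]
    split_ifs with h
    · obtain ⟨k, hk⟩ := h.2
      have := hm d h.1
      omega
    · exact Nat.zero_le _
  obtain ⟨a, ha⟩ : ∃ a, m - 3 • b = 2 • a := by
    refine exists_smul_of_dvd_count _ fun d _ => ?_
    rw [count_sub, count_nsmul, hcount_b]
    split_ifs with h
    · exact (Nat.Odd.sub_odd h.2 (by decide)).two_dvd
    · by_cases hd : d ∈ m
      · exact (Nat.not_odd_iff_even.1 fun ho => h ⟨hd, ho⟩).two_dvd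
      · simp [count_eq_zero.2 hd]
  exact ⟨a, b, (nodup_dedup m).filter _, by rw [← ha, tsub_add_cancel_of_le hle]⟩

lemma sum_map_const_mul {R : Type*} [NonUnitalNonAssocSemiring R] (k : R) (s : Multiset R) :
    (s.map (k * ·)).sum = k * s.sum := by
  simpa using sum_map_mul_left (s := s) (a := k) (f := id)

end Multiset

open Multiset

lemma isPartitionM_two_nsmul_add_three_nsmul {a b : Multiset ℕ} :
    IsPartitionM (2 • a + 3 • b) ↔ IsPartitionM a ∧ IsPartitionM b := by
  simp only [IsPartitionM, mem_add, mem_nsmul_of_ne_zero two_ne_zero,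
    mem_nsmul_of_ne_zero three_ne_zero, or_imp, forall_and]

lemma isPartitionM_map_mul {k : ℕ} (hk : k ≠ 0) {s : Multiset ℕ} :
    IsPartitionM (s.map (k * ·)) ↔ IsPartitionM s := by
  simp [IsPartitionM, Nat.pos_iff_ne_zero, hk]

lemma exists_map_mul_eq_of_forall_dvd {k : ℕ} {s : Multiset ℕ} (h : ∀ i ∈ s, k ∣ i) :
    ∃ t : Multiset ℕ, t.map (k * ·) = s := by
  refine ⟨s.map (· / k), ?_⟩
  rw [map_map]
  conv_rhs => rw [← map_id s]
  exact map_congr rfl fun i hi => Nat.mul_div_cancel' (h i hi)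

def pairsTwoThree (n : ℕ) : Set (Multiset ℕ × Multiset ℕ) :=
  {p | IsPartitionM p.1 ∧ IsPartitionM p.2 ∧ p.2.Nodup ∧ 2 * p.1.sum + 3 * p.2.sum = n}

lemma image_pairsTwoThree_nsmul (n : ℕ) :
    (fun p : Multiset ℕ × Multiset ℕ => 2 • p.1 + 3 • p.2) '' pairsTwoThree n =
      {m | IsPartitionM m ∧ (∀ i ∈ m, 2 ≤ m.count i) ∧ m.sum = n} := by
  ext m
  constructor
  · rintro ⟨⟨a, b⟩, ⟨ha, hb, -, hsum⟩, rfl⟩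
    exact ⟨isPartitionM_two_nsmul_add_three_nsmul.2 ⟨ha, hb⟩,
      two_le_count_two_nsmul_add_three_nsmul a b, by simpa [sum_nsmul] using hsum⟩
  · rintro ⟨hm, hm2, hsum⟩
    obtain ⟨a, b, hb, rfl⟩ := exists_two_nsmul_add_three_nsmul_eq hm2
    obtain ⟨ha, hb'⟩ := isPartitionM_two_nsmul_add_three_nsmul.1 hm
    exact ⟨(a, b), ⟨ha, hb', hb, by simpa [sum_nsmul] using hsum⟩, rfl⟩

lemma image_pairsTwoThree_map_mul (n : ℕ) :
    (fun p : Multiset ℕ × Multiset ℕ => (p.1.map (2 * ·), p.2.map (3 * ·))) ''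
        pairsTwoThree n =
      {x | IsEvenPartition x.1 ∧ IsDistinctMul3 x.2 ∧ x.1.sum + x.2.sum = n} := by
  ext ⟨α, β⟩
  constructor
  · rintro ⟨⟨a, b⟩, ⟨ha, hb, hbn, hsum⟩, hab⟩
    obtain ⟨rfl, rfl⟩ := Prod.ext_iff.1 hab
    exact ⟨⟨(isPartitionM_map_mul two_ne_zero).2 ha, by simp⟩,
      ⟨(isPartitionM_map_mul three_ne_zero).2 hb, hbn.map (mul_right_injective₀ three_ne_zero),
        by simp⟩, by simpa only [sum_map_const_mul] using hsum⟩
  · rintro ⟨⟨hα, hαe⟩, ⟨hβ, hβn, hβ3⟩, hsum⟩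
    obtain ⟨a, rfl⟩ := exists_map_mul_eq_of_forall_dvd fun i hi => (hαe i hi).two_dvd
    obtain ⟨b, rfl⟩ := exists_map_mul_eq_of_forall_dvd hβ3
    exact ⟨(a, b), ⟨(isPartitionM_map_mul two_ne_zero).1 hα,
      (isPartitionM_map_mul three_ne_zero).1 hβ, hβn.of_map _,
      by simpa only [sum_map_const_mul] using hsum⟩, rfl⟩

theorem mult_ge_two_decomposition (n : ℕ) :
    Nat.card {m : Multiset ℕ // IsPartitionM m ∧ (∀ i ∈ m, 2 ≤ m.count i) ∧ m.sum = n} =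
    Nat.card {x : Multiset ℕ × Multiset ℕ //
      IsEvenPartition x.1 ∧ IsDistinctMul3 x.2 ∧ x.1.sum + x.2.sum = n} := by
  have hinj : Function.Injective
      fun p : Multiset ℕ × Multiset ℕ => (p.1.map (2 * ·), p.2.map (3 * ·)) :=
    (map_injective (mul_right_injective₀ two_ne_zero)).prodMap
      (map_injective (mul_right_injective₀ three_ne_zero))
  calc _ = Nat.card ((fun p : Multiset ℕ × Multiset ℕ => 2 • p.1 + 3 • p.2) ''
          pairsTwoThree n) := by
        rw [image_pairsTwoThree_nsmul]; rfl
    _ = Nat.card (pairsTwoThree n) :=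
        Nat.card_image_of_injOn (injOn_two_nsmul_add_three_nsmul.mono fun _ hp => hp.2.2.1)
    _ = _ := by
        rw [← Nat.card_image_of_injective hinj, image_pairsTwoThree_map_mul]; rfl
end

section
/- There is a size-preserving bijection between 2-color partitions of n with colors r and b where color b appears only on even parts, and quadruples (λ¹, λ², λ³, λ⁴) where λ¹, λ², λ³ are partitions into even parts, λ⁴ is a staircase partition, and |λ¹|+|λ²|+|λ³|+|λ⁴| = n. -/
namespace List

theorem Pairwise.getElem_add_sub_le {l : List ℕ} (h : l.Pairwise (· < ·)) {i j : ℕ} (hij : i ≤ j)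
    (hj : j < l.length) : l[i] + (j - i) ≤ l[j] := by
  induction j, hij using Nat.le_induction with
  | base => simp
  | succ j hij ih =>
    have := pairwise_iff_getElem.1 h j (j + 1) (by omega) hj (by omega)
    have := ih (by omega)
    omega

theorem Pairwise.mapIdx_add {l : List ℕ} (h : l.Pairwise (· ≤ ·)) :
    (l.mapIdx fun i p => p + i).Pairwise (· < ·) := by
  rw [pairwise_iff_getElem] at h ⊢
  intro i j hi hj hij
  have := h i j (by simpa using hi) (by simpa using hj) hij
  simp only [getElem_mapIdx]
  omega

theorem Pairwise.mapIdx_sub {l : List ℕ} (h : l.Pairwise (· < ·)) :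
    (l.mapIdx fun i s => s - i).Pairwise (· ≤ ·) := by
  rw [pairwise_iff_getElem]
  intro i j hi hj hij
  have := h.getElem_add_sub_le hij.le (by simpa using hj)
  simp only [getElem_mapIdx]
  omega

theorem mapIdx_sub_mapIdx_add (l : List ℕ) :
    ((l.mapIdx fun i p => p + i).mapIdx fun i s => s - i) = l :=
  ext_getElem (by simp) fun i _ _ => by simp

theorem Pairwise.mapIdx_add_mapIdx_sub {l : List ℕ} (h : l.Pairwise (· < ·)) :
    ((l.mapIdx fun i s => s - i).mapIdx fun i p => p + i) = l :=
  ext_getElem (by simp) fun i hi _ => by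
    have := h.getElem_add_sub_le (Nat.zero_le i) (by simpa using hi)
    simp only [getElem_mapIdx, Function.comp_apply, mapIdx_mapIdx]
    omega

theorem sum_mapIdx_add (l : List ℕ) :
    (l.mapIdx fun i p => p + i).sum = l.sum + l.length.choose 2 := by
  induction l using reverseRecOn with
  | nil => simp
  | append_singleton l a ih =>
    simp only [mapIdx_concat, sum_append, ih, sum_singleton, length_append, length_singleton,
      Nat.choose_succ_succ' l.length 1, Nat.choose_one_right]
    ring

end List

theorem Multiset.filter_pos_add_replicate_zero (s : Multiset ℕ) :
    s.filter (0 < ·) + replicate (card s - card (s.filter (0 < ·))) 0 = s := by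
  have hzero : s.filter (¬ 0 < ·) = replicate (card s - card (s.filter (0 < ·))) 0 := by
    rw [eq_replicate]
    refine ⟨?_, fun b hb => by simpa using (mem_filter.1 hb).2⟩
    have := card_add (s.filter (0 < ·)) (s.filter (¬ 0 < ·))
    rw [filter_add_not] at this
    omega
  rw [← hzero, filter_add_not]

theorem Finset.sum_id_eq_sum_sort (S : Finset ℕ) : ∑ i ∈ S, i = S.sort.sum := by
  rw [Finset.sum_eq_multiset_sum, Multiset.map_id', ← Finset.sort_eq S (· ≤ ·), Multiset.sum_coe]

theorem IsPartitionM.card_le_sum {π : Multiset ℕ} (h : IsPartitionM π) :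
    Multiset.card π ≤ π.sum := by
  simpa using Multiset.card_nsmul_le_sum h

def betaSet (N : ℕ) (π : Multiset ℕ) : Finset ℕ :=
  ((π + Multiset.replicate (N - Multiset.card π) 0).sort.mapIdx fun i p => p + i).toFinset

def ofBetaSet (S : Finset ℕ) : Multiset ℕ :=
  Multiset.filter (0 < ·) ↑(S.sort.mapIdx fun i s => s - i)

section BetaSet

variable {N : ℕ} {π : Multiset ℕ}

theorem sort_betaSet (N : ℕ) (π : Multiset ℕ) : (betaSet N π).sort =
    (π + Multiset.replicate (N - Multiset.card π) 0).sort.mapIdx fun i p => p + i := by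
  have h := (Multiset.pairwise_sort
    (π + Multiset.replicate (N - Multiset.card π) 0) (· ≤ ·)).mapIdx_add
  exact (List.toFinset_sort _ h.nodup).2 (h.imp le_of_lt)

theorem card_betaSet (h : Multiset.card π ≤ N) : (betaSet N π).card = N := by
  rw [← Finset.length_sort (fun a b : ℕ => a ≤ b), sort_betaSet]
  simp only [List.length_mapIdx, Multiset.length_sort, Multiset.card_add, Multiset.card_replicate]
  omega

theorem sum_betaSet (h : Multiset.card π ≤ N) : ∑ i ∈ betaSet N π, i = π.sum + N.choose 2 := by
  rw [Finset.sum_id_eq_sum_sort, sort_betaSet, List.sum_mapIdx_add, ← Multiset.sum_coe,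
    Multiset.sort_eq, Multiset.length_sort, Multiset.card_add, Multiset.card_replicate,
    Nat.add_sub_cancel' h, Multiset.sum_add, Multiset.sum_replicate, smul_zero, add_zero]

theorem ofBetaSet_betaSet (hπ : IsPartitionM π) (N : ℕ) : ofBetaSet (betaSet N π) = π := by
  rw [ofBetaSet, sort_betaSet, List.mapIdx_sub_mapIdx_add, Multiset.sort_eq, Multiset.filter_add,
    Multiset.filter_eq_self.2 hπ,
    Multiset.filter_eq_nil.2 fun a ha => by simp [Multiset.eq_of_mem_replicate ha], add_zero]

theorem betaSet_ofBetaSet (S : Finset ℕ) : betaSet S.card (ofBetaSet S) = S := by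
  have hS := (S.sortedLT_sort).pairwise
  set u := S.sort.mapIdx fun i s => s - i
  have hu : (ofBetaSet S +
      Multiset.replicate (S.card - Multiset.card (ofBetaSet S)) 0).sort = u := by
    have : S.card = Multiset.card (u : Multiset ℕ) := by simp [u]
    rw [ofBetaSet, this, Multiset.filter_pos_add_replicate_zero, Multiset.coe_sort]
    exact List.mergeSort_eq_self _ hS.mapIdx_sub
  rw [betaSet, hu, hS.mapIdx_add_mapIdx_sub, Finset.sort_toFinset]

theorem isPartitionM_ofBetaSet (S : Finset ℕ) : IsPartitionM (ofBetaSet S) :=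
  fun _ hi => Multiset.of_mem_filter hi

theorem card_ofBetaSet_le (S : Finset ℕ) : Multiset.card (ofBetaSet S) ≤ S.card := by
  refine (Multiset.card_le_card (Multiset.filter_le _ _)).trans_eq ?_
  rw [Multiset.coe_card, List.length_mapIdx, Finset.length_sort]

theorem sum_ofBetaSet (S : Finset ℕ) : (ofBetaSet S).sum + S.card.choose 2 = ∑ i ∈ S, i := by
  conv_rhs => rw [← betaSet_ofBetaSet S, sum_betaSet (card_ofBetaSet_le S)]

end BetaSet

/-- `S ↦ ({x | 2x ∈ S}, {x | 2x + 1 ∈ S})` -/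
def runners : Finset ℕ ≃ Finset ℕ × Finset ℕ :=
  Equiv.natSumNatEquivNat.symm.finsetCongr.trans Finset.sumEquiv.toEquiv

theorem runners_symm_apply (A B : Finset ℕ) :
    runners.symm (A, B) = (A.disjSum B).map Equiv.natSumNatEquivNat.toEmbedding := rfl

theorem card_runners_symm (A B : Finset ℕ) : (runners.symm (A, B)).card = A.card + B.card := by
  rw [runners_symm_apply, Finset.card_map, Finset.card_disjSum]

theorem sum_runners_symm (A B : Finset ℕ) :
    ∑ i ∈ runners.symm (A, B), i = 2 * ∑ i ∈ A, i + (2 * ∑ i ∈ B, i + B.card) := by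
  rw [runners_symm_apply, Finset.sum_map, Finset.sum_disjSum]
  simp [Equiv.natSumNatEquivNat_apply, Finset.sum_add_distrib, Finset.mul_sum]

theorem card_runners (S : Finset ℕ) : (runners S).1.card + (runners S).2.card = S.card := by
  conv_rhs => rw [← runners.symm_apply_apply S]
  exact (card_runners_symm _ _).symm

theorem sum_runners (S : Finset ℕ) : ∑ i ∈ S, i =
    2 * ∑ i ∈ (runners S).1, i + (2 * ∑ i ∈ (runners S).2, i + (runners S).2.card) := by
  conv_lhs => rw [← runners.symm_apply_apply S]
  exact sum_runners_symm _ _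

/-- The 2-core of a partition whose beta-set has `N₀` of its `2n` beads on the even runner is the
staircase with `coreRows n N₀` rows. -/
def coreRows (n N₀ : ℕ) : ℕ := if N₀ ≤ n then 2 * (n - N₀) else 2 * (N₀ - n) - 1

def evenBeads (n k : ℕ) : ℕ := if Even k then n - k / 2 else n + (k + 1) / 2

theorem coreRows_evenBeads {n k : ℕ} (hk : k ≤ 2 * n) : coreRows n (evenBeads n k) = k := by
  simp only [coreRows, evenBeads, Nat.even_iff]
  split_ifs <;> omega

theorem evenBeads_coreRows {n N₀ : ℕ} (h : N₀ ≤ 2 * n) : evenBeads n (coreRows n N₀) = N₀ := by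
  simp only [coreRows, evenBeads, Nat.even_iff]
  split_ifs <;> omega

theorem choose_two_add_choose_two {n N₀ N₁ : ℕ} (h : N₀ + N₁ = 2 * n) :
    2 * N₀.choose 2 + (2 * N₁.choose 2 + N₁) =
      (2 * n).choose 2 + (coreRows n N₀ + 1).choose 2 := by
  unfold coreRows
  split_ifs with hN₀
  · obtain ⟨j, rfl⟩ : ∃ j, n = N₀ + j := ⟨n - N₀, by omega⟩
    obtain rfl : N₁ = N₀ + 2 * j := by omega
    rw [Nat.add_sub_cancel_left]
    qify
    push_cast [Nat.cast_choose_two]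
    ring
  · obtain ⟨j, rfl⟩ : ∃ j, N₀ = n + j + 1 := ⟨N₀ - n - 1, by omega⟩
    obtain rfl : n = N₁ + j + 1 := by omega
    rw [show 2 * (N₁ + j + 1 + j + 1 - (N₁ + j + 1)) - 1 + 1 = 2 * (j + 1) by omega]
    qify
    push_cast [Nat.cast_choose_two]
    ring

theorem self_le_choose_two_succ (k : ℕ) : k ≤ (k + 1).choose 2 := by
  rw [Nat.choose_succ_succ' k 1, Nat.choose_one_right]
  exact Nat.le_add_right k _

def twoQuotient (n : ℕ) (π : Multiset ℕ) : Multiset ℕ × Multiset ℕ × ℕ :=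
  let S := runners (betaSet (2 * n) π)
  (ofBetaSet S.1, ofBetaSet S.2, coreRows n S.1.card)

def abacusOf (n : ℕ) (q : Multiset ℕ × Multiset ℕ × ℕ) : Finset ℕ :=
  runners.symm (betaSet (evenBeads n q.2.2) q.1, betaSet (2 * n - evenBeads n q.2.2) q.2.1)

def ofTwoQuotient (n : ℕ) (q : Multiset ℕ × Multiset ℕ × ℕ) : Multiset ℕ :=
  ofBetaSet (abacusOf n q)

section TwoQuotient

variable {n : ℕ} {π α β : Multiset ℕ} {k : ℕ}

theorem ofTwoQuotient_twoQuotient (hπ : IsPartitionM π) (h : Multiset.card π ≤ 2 * n) :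
    ofTwoQuotient n (twoQuotient n π) = π := by
  simp only [twoQuotient, ofTwoQuotient, abacusOf]
  set S := betaSet (2 * n) π
  have hcard : (runners S).1.card + (runners S).2.card = 2 * n := by
    rw [card_runners, card_betaSet h]
  rw [evenBeads_coreRows (by omega), betaSet_ofBetaSet,
    show 2 * n - (runners S).1.card = (runners S).2.card by omega, betaSet_ofBetaSet,
    Prod.mk.eta, Equiv.symm_apply_apply, ofBetaSet_betaSet hπ]

theorem sum_eq_twoQuotient (h : Multiset.card π ≤ 2 * n) :
    π.sum = 2 * (twoQuotient n π).1.sum + 2 * (twoQuotient n π).2.1.sum +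
      ((twoQuotient n π).2.2 + 1).choose 2 := by
  simp only [twoQuotient]
  set S := betaSet (2 * n) π
  have hcard : (runners S).1.card + (runners S).2.card = 2 * n := by
    rw [card_runners, card_betaSet h]
  have hsum := sum_runners S
  rw [sum_betaSet h, ← sum_ofBetaSet (runners S).1, ← sum_ofBetaSet (runners S).2] at hsum
  have := choose_two_add_choose_two hcard
  omega

theorem card_le_evenBeads (hα : IsPartitionM α) (hβ : IsPartitionM β)
    (hsize : 2 * α.sum + 2 * β.sum + (k + 1).choose 2 ≤ n) :
    Multiset.card α ≤ evenBeads n k ∧ Multiset.card β ≤ 2 * n - evenBeads n k ∧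
      evenBeads n k ≤ 2 * n := by
  have := hα.card_le_sum
  have := hβ.card_le_sum
  have := self_le_choose_two_succ k
  simp only [evenBeads, Nat.even_iff]
  split_ifs <;> omega

theorem card_abacusOf (hα : IsPartitionM α) (hβ : IsPartitionM β)
    (hsize : 2 * α.sum + 2 * β.sum + (k + 1).choose 2 ≤ n) :
    (abacusOf n (α, β, k)).card = 2 * n := by
  obtain ⟨hα', hβ', hN₀⟩ := card_le_evenBeads hα hβ hsize
  rw [abacusOf, card_runners_symm, card_betaSet hα', card_betaSet hβ']
  omega

theorem twoQuotient_ofTwoQuotient (hα : IsPartitionM α) (hβ : IsPartitionM β)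
    (hsize : 2 * α.sum + 2 * β.sum + (k + 1).choose 2 ≤ n) :
    twoQuotient n (ofTwoQuotient n (α, β, k)) = (α, β, k) := by
  obtain ⟨hα', -, -⟩ := card_le_evenBeads hα hβ hsize
  have hk : k ≤ 2 * n := by have := self_le_choose_two_succ k; omega
  simp only [twoQuotient, ofTwoQuotient]
  rw [← card_abacusOf hα hβ hsize, betaSet_ofBetaSet, abacusOf, Equiv.apply_symm_apply,
    ofBetaSet_betaSet hα, ofBetaSet_betaSet hβ, card_betaSet hα', coreRows_evenBeads hk]

theorem sum_ofTwoQuotient (hα : IsPartitionM α) (hβ : IsPartitionM β)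
    (hsize : 2 * α.sum + 2 * β.sum + (k + 1).choose 2 ≤ n) :
    (ofTwoQuotient n (α, β, k)).sum = 2 * α.sum + 2 * β.sum + (k + 1).choose 2 := by
  have h : Multiset.card (ofTwoQuotient n (α, β, k)) ≤ 2 * n :=
    (card_ofBetaSet_le _).trans_eq (card_abacusOf hα hβ hsize)
  rw [sum_eq_twoQuotient h, twoQuotient_ofTwoQuotient hα hβ hsize]

end TwoQuotient

theorem IsPartitionM.isEvenPartition_map_two_mul {α : Multiset ℕ} (h : IsPartitionM α) :
    IsEvenPartition (α.map (2 * ·)) := by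
  refine ⟨fun i hi => ?_, fun i hi => ?_⟩ <;> obtain ⟨a, ha, rfl⟩ := Multiset.mem_map.1 hi
  · exact Nat.mul_pos two_pos (h a ha)
  · exact even_two_mul a

theorem IsEvenPartition.isPartitionM_map_div_two {e : Multiset ℕ} (h : IsEvenPartition e) :
    IsPartitionM (e.map (· / 2)) := by
  intro i hi
  obtain ⟨a, ha, rfl⟩ := Multiset.mem_map.1 hi
  obtain ⟨b, rfl⟩ := h.2 a ha
  have := h.1 _ ha
  omega

theorem IsEvenPartition.map_two_mul_map_div_two {e : Multiset ℕ} (h : IsEvenPartition e) :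
    (e.map (· / 2)).map (2 * ·) = e := by
  rw [Multiset.map_map]
  refine (Multiset.map_congr rfl fun a ha => ?_).trans (Multiset.map_id e)
  obtain ⟨b, rfl⟩ := h.2 a ha
  simp only [Function.comp_apply, id_eq]
  omega

theorem Multiset.map_div_two_map_two_mul (α : Multiset ℕ) : (α.map (2 * ·)).map (· / 2) = α := by
  simp [Multiset.map_map]

theorem Multiset.sum_map_two_mul (α : Multiset ℕ) : (α.map (2 * ·)).sum = 2 * α.sum := by
  simpa using Multiset.sum_map_mul_left (a := 2) (s := α) (f := id)

theorem sum_staircase (k : ℕ) : ((Multiset.range k).map (· + 1)).sum = (k + 1).choose 2 := by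
  change ∑ i ∈ Finset.range k, (i + 1) = _
  rw [Nat.choose_two_right, ← Finset.sum_range_id, Finset.sum_range_succ', add_zero]

def IsTwoColorPartition (n : ℕ) (x : Multiset ℕ × Multiset ℕ) : Prop :=
  IsPartitionM x.1 ∧ IsEvenPartition x.2 ∧ x.1.sum + x.2.sum = n

def IsQuadruple (n : ℕ) (t : Multiset ℕ × Multiset ℕ × Multiset ℕ × Multiset ℕ) : Prop :=
  IsEvenPartition t.1 ∧ IsEvenPartition t.2.1 ∧ IsEvenPartition t.2.2.1 ∧ IsStaircase t.2.2.2 ∧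
    t.1.sum + t.2.1.sum + t.2.2.1.sum + t.2.2.2.sum = n

def quadrupleOf (n : ℕ) (x : Multiset ℕ × Multiset ℕ) :
    Multiset ℕ × Multiset ℕ × Multiset ℕ × Multiset ℕ :=
  let q := twoQuotient n x.1
  (q.1.map (2 * ·), q.2.1.map (2 * ·), x.2, (Multiset.range q.2.2).map (· + 1))

def twoColorOf (n : ℕ) (t : Multiset ℕ × Multiset ℕ × Multiset ℕ × Multiset ℕ) :
    Multiset ℕ × Multiset ℕ :=
  (ofTwoQuotient n (t.1.map (· / 2), t.2.1.map (· / 2), Multiset.card t.2.2.2), t.2.2.1)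

section Quadruple

variable {n : ℕ}

theorem IsTwoColorPartition.card_le {x : Multiset ℕ × Multiset ℕ} (hx : IsTwoColorPartition n x) :
    Multiset.card x.1 ≤ 2 * n := by
  have := hx.1.card_le_sum
  have := hx.2.2
  omega

theorem isQuadruple_quadrupleOf {x : Multiset ℕ × Multiset ℕ} (hx : IsTwoColorPartition n x) :
    IsQuadruple n (quadrupleOf n x) := by
  refine ⟨(isPartitionM_ofBetaSet _).isEvenPartition_map_two_mul,
    (isPartitionM_ofBetaSet _).isEvenPartition_map_two_mul, hx.2.1, ⟨_, rfl⟩, ?_⟩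
  have := sum_eq_twoQuotient (n := n) hx.card_le
  have := hx.2.2
  simp only [quadrupleOf, Multiset.sum_map_two_mul, sum_staircase]
  omega

theorem twoColorOf_quadrupleOf {x : Multiset ℕ × Multiset ℕ} (hx : IsTwoColorPartition n x) :
    twoColorOf n (quadrupleOf n x) = x := by
  simp only [twoColorOf, quadrupleOf, Multiset.map_div_two_map_two_mul, Multiset.card_map,
    Multiset.card_range, ofTwoQuotient_twoQuotient hx.1 hx.card_le]

theorem IsQuadruple.sum_eq {t : Multiset ℕ × Multiset ℕ × Multiset ℕ × Multiset ℕ}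
    (ht : IsQuadruple n t) : 2 * (t.1.map (· / 2)).sum + 2 * (t.2.1.map (· / 2)).sum +
      (Multiset.card t.2.2.2 + 1).choose 2 + t.2.2.1.sum = n := by
  obtain ⟨h₁, h₂, -, ⟨k, hk⟩, hsum⟩ := ht
  rw [← Multiset.sum_map_two_mul, ← Multiset.sum_map_two_mul, h₁.map_two_mul_map_div_two,
    h₂.map_two_mul_map_div_two, hk, Multiset.card_map, Multiset.card_range, ← sum_staircase, ← hk]
  omega

theorem isTwoColorPartition_twoColorOf {t : Multiset ℕ × Multiset ℕ × Multiset ℕ × Multiset ℕ}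
    (ht : IsQuadruple n t) : IsTwoColorPartition n (twoColorOf n t) := by
  have hsum := ht.sum_eq
  refine ⟨isPartitionM_ofBetaSet _, ht.2.2.1, ?_⟩
  rw [twoColorOf, sum_ofTwoQuotient ht.1.isPartitionM_map_div_two ht.2.1.isPartitionM_map_div_two
    (by omega)]
  omega

theorem quadrupleOf_twoColorOf {t : Multiset ℕ × Multiset ℕ × Multiset ℕ × Multiset ℕ}
    (ht : IsQuadruple n t) : quadrupleOf n (twoColorOf n t) = t := by
  obtain ⟨e₁, e₂, e₃, s⟩ := t
  have hsum := ht.sum_eq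
  obtain ⟨h₁, h₂, -, ⟨k, rfl⟩, -⟩ := ht
  dsimp only at h₁ h₂ hsum
  simp only [quadrupleOf, twoColorOf, Multiset.card_map, Multiset.card_range] at hsum ⊢
  rw [twoQuotient_ofTwoQuotient h₁.isPartitionM_map_div_two h₂.isPartitionM_map_div_two
    (by omega), h₁.map_two_mul_map_div_two, h₂.map_two_mul_map_div_two]

end Quadruple

theorem two_color_bijection (n : ℕ) :
    Nonempty ({x : Multiset ℕ × Multiset ℕ //
        IsPartitionM x.1 ∧ IsEvenPartition x.2 ∧ x.1.sum + x.2.sum = n} ≃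
      {t : Multiset ℕ × Multiset ℕ × Multiset ℕ × Multiset ℕ //
        IsEvenPartition t.1 ∧ IsEvenPartition t.2.1 ∧ IsEvenPartition t.2.2.1 ∧
        IsStaircase t.2.2.2 ∧
        t.1.sum + t.2.1.sum + t.2.2.1.sum + t.2.2.2.sum = n}) :=
  ⟨{ toFun := fun x => ⟨quadrupleOf n x.1, isQuadruple_quadrupleOf x.2⟩
     invFun := fun t => ⟨twoColorOf n t.1, isTwoColorPartition_twoColorOf t.2⟩
     left_inv := fun x => Subtype.ext (twoColorOf_quadrupleOf x.2)
     right_inv := fun t => Subtype.ext (quadrupleOf_twoColorOf t.2) }⟩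
end

section
/- The number of 2-color partitions of n with colors r and b, where color b appears only on even parts, equals the number of quadruples (λ¹, λ², λ³, λ⁴) of partitions with λ¹, λ², λ³ having all parts even, λ⁴ a staircase partition, and total size n. Consequently, a(n) equals the sum over m ≥ 0 with m(m+1)/2 ≤ n of the number of triples of even-part partitions of total size n − m(m+1)/2. -/
/-!
Encode a partition by its boundary word: every `true` is a part, equal to the number of `false`s
before it. The word is determined by the partition up to leading `true`s (zero parts) and trailing
`false`s. Reading a word two letters at a time splits it into two runners, whose partitions
`λ₀, λ₁` form the 2-quotient; the difference `c` of their numbers of parts is the charge, and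
`2|λ| = c(c-1) + 4|λ₀| + 4|λ₁|`, where `c(c-1) = k(k+1)` is twice the size of the staircase
2-core `(k, …, 1)`. After padding two words to the same length and number of parts, either of
"same partition" and "same charge and quotient" forces the words to be equal, so partitions
correspond to triples (staircase, `2λ₀`, `2λ₁`). Keeping the even second colour gives the
quadruples, and grouping them by the length of the staircase gives the sum.
-/

open Multiset

noncomputable def equivOfSameFibres {α β γ : Type*} {f : α → β} {g : α → γ}
    (hf : Function.Surjective f) (hg : Function.Surjective g)
    (h : ∀ a a', f a = f a' ↔ g a = g a') : β ≃ γ :=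
  (Setoid.quotientKerEquivOfSurjective f hf).symm.trans <|
    (Quotient.congrRight h).trans (Setoid.quotientKerEquivOfSurjective g hg)

lemma equivOfSameFibres_apply {α β γ : Type*} {f : α → β} {g : α → γ}
    (hf : Function.Surjective f) (hg : Function.Surjective g)
    (h : ∀ a a', f a = f a' ↔ g a = g a') (a : α) :
    equivOfSameFibres hf hg h (f a) = g a := by
  have : (Setoid.quotientKerEquivOfSurjective f hf).symm (f a) = ⟦a⟧ :=
    (Equiv.symm_apply_eq _).2 rfl
  rw [equivOfSameFibres, Equiv.trans_apply, this]
  rfl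

/-- The staircase `(k, …, 2, 1)` is the 2-core of charge `c`, where `k = coreSize c`. -/
def coreSize (c : ℤ) : ℕ := if 0 < c then (c - 1).toNat else (-c).toNat

def coreCharge (k : ℕ) : ℤ := if Even k then -k else k + 1

lemma coreSize_mul_succ (c : ℤ) : (coreSize c * (coreSize c + 1) : ℤ) = c * (c - 1) := by
  unfold coreSize
  split_ifs with hc
  · rw [Int.toNat_of_nonneg (by omega)]; ring
  · rw [Int.toNat_of_nonneg (by omega)]; ring

lemma coreSize_injOn_even {c c' : ℤ} (hc : Even c) (hc' : Even c')
    (h : coreSize c = coreSize c') : c = c' := by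
  obtain ⟨r, rfl⟩ := hc
  obtain ⟨r', rfl⟩ := hc'
  unfold coreSize at h
  split_ifs at h <;> omega

lemma coreSize_coreCharge (k : ℕ) : coreSize (coreCharge k) = k := by
  unfold coreSize coreCharge
  split_ifs <;> omega

lemma even_coreCharge (k : ℕ) : Even (coreCharge k) := by
  unfold coreCharge
  split_ifs with hk
  · exact (Int.even_coe_nat k).2 hk |>.neg
  · exact Int.even_add_one.2 (by simpa [Int.even_coe_nat] using hk)

def positiveParts (q : Multiset ℕ) : {m : Multiset ℕ // IsPartitionM m} :=
  ⟨q.filter (0 < ·), fun _ h => (mem_filter.1 h).2⟩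

lemma replicate_count_zero_add_positiveParts (q : Multiset ℕ) :
    replicate (q.count 0) 0 + (positiveParts q).1 = q := by
  conv_rhs => rw [← filter_add_not (· = 0) q]
  rw [filter_eq']
  exact congrArg _ (filter_congr fun i _ => by omega)

lemma sum_positiveParts (q : Multiset ℕ) : (positiveParts q).1.sum = q.sum := by
  conv_rhs => rw [← replicate_count_zero_add_positiveParts q]
  simp

lemma positiveParts_replicate_zero_add (s : ℕ) (q : Multiset ℕ) :
    positiveParts (replicate s 0 + q) = positiveParts q :=
  Subtype.ext <| by simp [positiveParts, filter_add, mem_replicate]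

lemma positiveParts_of_isPartitionM {m : Multiset ℕ} (hm : IsPartitionM m) :
    positiveParts m = ⟨m, hm⟩ :=
  Subtype.ext (filter_eq_self.2 hm)

lemma eq_of_positiveParts_eq {q q' : Multiset ℕ} (hcard : card q = card q')
    (h : positiveParts q = positiveParts q') : q = q' := by
  have hq := replicate_count_zero_add_positiveParts q
  have hq' := replicate_count_zero_add_positiveParts q'
  have hcount : q.count 0 = q'.count 0 := by
    have h1 := congrArg card hq
    have h2 := congrArg card hq'
    rw [card_add, card_replicate] at h1 h2
    rw [h] at h1
    omega
  rw [← hq, ← hq', h, hcount]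

namespace BoundaryWord

def parts : List Bool → Multiset ℕ
  | [] => 0
  | true :: w => 0 ::ₘ parts w
  | false :: w => (parts w).map (· + 1)

@[simp] lemma parts_nil : parts [] = 0 := rfl
@[simp] lemma parts_cons_true (w : List Bool) : parts (true :: w) = 0 ::ₘ parts w := rfl
@[simp] lemma parts_cons_false (w : List Bool) : parts (false :: w) = (parts w).map (· + 1) :=
  rfl

@[simp] lemma card_parts (w : List Bool) : card (parts w) = w.count true := by
  induction w with
  | nil => rfl
  | cons a w ih => cases a <;> simp [ih]

lemma sum_parts_cons_false (w : List Bool) :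
    (parts (false :: w)).sum = (parts w).sum + w.count true := by
  simp [sum_map_add]

lemma parts_replicate_true_append (s : ℕ) (w : List Bool) :
    parts (List.replicate s true ++ w) = replicate s 0 + parts w := by
  induction s with
  | zero => simp
  | succ s ih => simp [List.replicate_succ, ih, replicate_succ]

lemma parts_replicate_false_append (k : ℕ) (w : List Bool) :
    parts (List.replicate k false ++ w) = (parts w).map (· + k) := by
  induction k with
  | zero => simp
  | succ k ih => simp [List.replicate_succ, ih, map_map, add_assoc]

lemma parts_append_replicate_false (w : List Bool) (t : ℕ) :
    parts (w ++ List.replicate t false) = parts w := by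
  induction w with
  | nil => induction t <;> simp_all [List.replicate_succ]
  | cons a w ih => cases a <;> simp [ih]

lemma eq_of_parts_eq {w w' : List Bool} (hlen : w.length = w'.length)
    (h : parts w = parts w') : w = w' := by
  induction w generalizing w' with
  | nil => exact (List.length_eq_zero_iff.1 hlen.symm).symm
  | cons a w ih =>
    obtain _ | ⟨a', w'⟩ := w'
    · simp at hlen
    have hlen' : w.length = w'.length := by simpa using hlen
    cases a <;> cases a'
    · rw [ih hlen' (map_injective (add_left_injective 1) h)]
    · simpa using congrArg (0 ∈ ·) h
    · simpa using congrArg (0 ∈ ·) h.symm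
    · rw [ih hlen' ((cons_inj_right 0).1 h)]

def ascendingWord : ℕ → List ℕ → List Bool
  | _, [] => []
  | z, p :: l => List.replicate (p - z) false ++ true :: ascendingWord p l

lemma parts_ascendingWord : ∀ (z : ℕ) (l : List ℕ), l.Pairwise (· ≤ ·) → (∀ p ∈ l, z ≤ p) →
    parts (ascendingWord z l) = (l.map (· - z) : List ℕ)
  | _, [], _, _ => rfl
  | z, p :: l, hl, hz => by
    rw [List.pairwise_cons] at hl
    have hzp : z ≤ p := hz p List.mem_cons_self
    rw [ascendingWord, parts_replicate_false_append, parts_cons_true,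
      parts_ascendingWord p l hl.2 hl.1]
    simp only [map_coe, List.map_map, List.map_cons, ← cons_coe, map_cons]
    rw [zero_add, List.map_congr_left (g := (· - z)) fun x hx => by
      have := hl.1 x hx; simp only [Function.comp_apply]; omega]

lemma exists_parts_eq (q : Multiset ℕ) : ∃ w, parts w = q :=
  ⟨ascendingWord 0 (q.sort (· ≤ ·)), by
    rw [parts_ascendingWord 0 _ (q.pairwise_sort _) fun p _ => p.zero_le]
    simp [sort_eq]⟩

/-- The coordinate words `l.map Prod.fst` and `l.map Prod.snd` are the two runners of the
2-abacus of `interleave l`. -/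
def interleave (l : List (Bool × Bool)) : List Bool := l.flatMap fun p => [p.1, p.2]

def charge (l : List (Bool × Bool)) : ℤ :=
  (l.map Prod.fst).count true - (l.map Prod.snd).count true

@[simp] lemma interleave_nil : interleave [] = [] := rfl
@[simp] lemma interleave_cons (p : Bool × Bool) (l : List (Bool × Bool)) :
    interleave (p :: l) = p.1 :: p.2 :: interleave l := rfl

lemma interleave_append (l l' : List (Bool × Bool)) :
    interleave (l ++ l') = interleave l ++ interleave l' :=
  List.flatMap_append

lemma interleave_replicate (s : ℕ) (a : Bool) :
    interleave (List.replicate s (a, a)) = List.replicate (2 * s) a := by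
  induction s with
  | zero => rfl
  | succ s ih => rw [List.replicate_succ, interleave_cons, ih, mul_add, List.replicate_succ]; rfl

lemma count_true_interleave (l : List (Bool × Bool)) :
    (interleave l).count true = (l.map Prod.fst).count true + (l.map Prod.snd).count true := by
  induction l with
  | nil => rfl
  | cons p l ih =>
    simp only [interleave_cons, List.count_cons, ih, beq_true, List.map_cons]
    omega

lemma length_interleave (l : List (Bool × Bool)) : (interleave l).length = 2 * l.length := by
  induction l with
  | nil => rfl
  | cons p l ih =>
    simp only [interleave_cons, List.length_cons, ih]
    ring

theorem two_mul_sum_parts_interleave (l : List (Bool × Bool)) :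
    2 * ((parts (interleave l)).sum : ℤ) = charge l * (charge l - 1) +
      4 * (parts (l.map Prod.fst)).sum + 4 * (parts (l.map Prod.snd)).sum := by
  induction l with
  | nil => simp [charge]
  | cons p l ih =>
    obtain ⟨a, b⟩ := p
    have hcount := count_true_interleave l
    simp only [charge] at ih ⊢
    cases a <;> cases b <;>
      simp only [interleave_cons, List.map_cons, sum_parts_cons_false, parts_cons_true,
        sum_cons, List.count_cons_self, List.count_cons_of_ne, ne_eq, reduceCtorEq,
        not_false_eq_true, zero_add, hcount] at ih ⊢ <;>
      simp only [Nat.cast_add, Nat.cast_one] <;> linear_combination ih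

lemma interleave_injective : Function.Injective interleave
  | [], [], _ => rfl
  | [], _ :: _, h => by simp at h
  | _ :: _, [], h => by simp at h
  | (a, b) :: l, (a', b') :: l', h => by
    simp only [interleave_cons, List.cons.injEq] at h
    rw [h.1, h.2.1, interleave_injective h.2.2]

lemma exists_interleave_eq : ∀ w : List Bool, Even w.length → ∃ l, interleave l = w
  | [], _ => ⟨[], rfl⟩
  | [_], h => by simp at h
  | a :: b :: w, h => by
    obtain ⟨l, rfl⟩ := exists_interleave_eq w (by simpa [Nat.even_add_one] using h)
    exact ⟨(a, b) :: l, rfl⟩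

def toPartition (l : List (Bool × Bool)) : {m : Multiset ℕ // IsPartitionM m} :=
  positiveParts (parts (interleave l))

def toCoreQuotient (l : List (Bool × Bool)) :
    ℕ × {m : Multiset ℕ // IsPartitionM m} × {m : Multiset ℕ // IsPartitionM m} :=
  (coreSize (charge l), positiveParts (parts (l.map Prod.fst)),
    positiveParts (parts (l.map Prod.snd)))

lemma toPartition_eq_iff_of_shape {l l' : List (Bool × Bool)} (hlen : l.length = l'.length)
    (hcount : (interleave l).count true = (interleave l').count true) :
    toPartition l = toPartition l' ↔ l = l' := by
  refine ⟨fun h => interleave_injective (eq_of_parts_eq ?_ ?_), fun h => h ▸ rfl⟩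
  · rw [length_interleave, length_interleave, hlen]
  · exact eq_of_positiveParts_eq (by simpa using hcount) h

lemma toCoreQuotient_eq_iff_of_shape {l l' : List (Bool × Bool)} (hlen : l.length = l'.length)
    (hcount : (interleave l).count true = (interleave l').count true)
    (he : Even (charge l)) (he' : Even (charge l')) :
    toCoreQuotient l = toCoreQuotient l' ↔ l = l' := by
  refine ⟨fun h => ?_, fun h => h ▸ rfl⟩
  simp only [toCoreQuotient, Prod.mk.injEq] at h
  obtain ⟨hsize, hfst, hsnd⟩ := h
  have hcharge := coreSize_injOn_even he he' hsize
  rw [count_true_interleave, count_true_interleave] at hcount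
  unfold charge at hcharge
  have hfst : l.map Prod.fst = l'.map Prod.fst :=
    eq_of_parts_eq (by simp [hlen]) (eq_of_positiveParts_eq (by simp only [card_parts]; omega) hfst)
  have hsnd : l.map Prod.snd = l'.map Prod.snd :=
    eq_of_parts_eq (by simp [hlen]) (eq_of_positiveParts_eq (by simp only [card_parts]; omega) hsnd)
  rw [← List.zip_unzip l, ← List.zip_unzip l', List.unzip_fst, List.unzip_snd, List.unzip_fst,
    List.unzip_snd, hfst, hsnd]

def pad (s t : ℕ) (l : List (Bool × Bool)) : List (Bool × Bool) :=
  List.replicate s (true, true) ++ l ++ List.replicate t (false, false)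

section Padding

variable (s t : ℕ) (l : List (Bool × Bool))

lemma length_pad : (pad s t l).length = s + l.length + t := by
  simp [pad, add_assoc]

lemma parts_interleave_pad :
    parts (interleave (pad s t l)) = replicate (2 * s) 0 + parts (interleave l) := by
  rw [pad, interleave_append, interleave_append, interleave_replicate, interleave_replicate,
    List.append_assoc, parts_replicate_true_append, parts_append_replicate_false]

lemma parts_map_fst_pad :
    parts ((pad s t l).map Prod.fst) = replicate s 0 + parts (l.map Prod.fst) := by
  simp [pad, parts_replicate_true_append, parts_append_replicate_false]

lemma parts_map_snd_pad :
    parts ((pad s t l).map Prod.snd) = replicate s 0 + parts (l.map Prod.snd) := by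
  simp [pad, parts_replicate_true_append, parts_append_replicate_false]

lemma count_true_interleave_pad :
    (interleave (pad s t l)).count true = (interleave l).count true + 2 * s := by
  rw [← card_parts, ← card_parts, parts_interleave_pad]
  simp [add_comm]

lemma charge_pad : charge (pad s t l) = charge l := by
  rw [charge, charge, ← card_parts, ← card_parts, ← card_parts, ← card_parts, parts_map_fst_pad,
    parts_map_snd_pad]
  simp

lemma toPartition_pad : toPartition (pad s t l) = toPartition l := by
  rw [toPartition, parts_interleave_pad, positiveParts_replicate_zero_add, toPartition]

lemma toCoreQuotient_pad : toCoreQuotient (pad s t l) = toCoreQuotient l := by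
  rw [toCoreQuotient, charge_pad, parts_map_fst_pad, parts_map_snd_pad,
    positiveParts_replicate_zero_add, positiveParts_replicate_zero_add, toCoreQuotient]

end Padding

lemma even_charge_iff (l : List (Bool × Bool)) :
    Even (charge l) ↔ Even ((interleave l).count true) := by
  rw [count_true_interleave, charge, Int.even_iff, Nat.even_iff]
  omega

theorem toPartition_eq_iff {l l' : List (Bool × Bool)} (he : Even (charge l))
    (he' : Even (charge l')) :
    toPartition l = toPartition l' ↔ toCoreQuotient l = toCoreQuotient l' := by
  obtain ⟨a, ha⟩ := (even_charge_iff l).1 he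
  obtain ⟨a', ha'⟩ := (even_charge_iff l').1 he'
  have hlen : (pad a' (l'.length + a) l).length = (pad a (l.length + a') l').length := by
    simp only [length_pad]; ring
  have hcount : (interleave (pad a' (l'.length + a) l)).count true =
      (interleave (pad a (l.length + a') l')).count true := by
    rw [count_true_interleave_pad, count_true_interleave_pad, ha, ha']; ring
  rw [← toPartition_pad a' (l'.length + a) l, ← toPartition_pad a (l.length + a') l',
    ← toCoreQuotient_pad a' (l'.length + a) l, ← toCoreQuotient_pad a (l.length + a') l',
    toPartition_eq_iff_of_shape hlen hcount, toCoreQuotient_eq_iff_of_shape hlen hcount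
      ((charge_pad _ _ l).symm ▸ he) ((charge_pad _ _ l').symm ▸ he')]

lemma exists_parts_interleave_eq (q : Multiset ℕ) : ∃ l, parts (interleave l) = q := by
  obtain ⟨w, hw⟩ := exists_parts_eq q
  obtain ⟨l, hl⟩ := exists_interleave_eq (w ++ List.replicate (w.length % 2) false)
    (by rw [List.length_append, List.length_replicate, Nat.even_iff]; omega)
  exact ⟨l, by rw [hl, parts_append_replicate_false, hw]⟩

lemma exists_parts_map_fst_snd_eq (q q' : Multiset ℕ) :
    ∃ l : List (Bool × Bool), parts (l.map Prod.fst) = q ∧ parts (l.map Prod.snd) = q' := by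
  obtain ⟨u, hu⟩ := exists_parts_eq q
  obtain ⟨v, hv⟩ := exists_parts_eq q'
  let u' := u ++ List.replicate (v.length - u.length) false
  let v' := v ++ List.replicate (u.length - v.length) false
  have hlen : u'.length = v'.length := by
    simp only [u', v', List.length_append, List.length_replicate]
    omega
  refine ⟨u'.zip v', ?_, ?_⟩
  · rw [List.map_fst_zip hlen.le, parts_append_replicate_false, hu]
  · rw [List.map_snd_zip hlen.ge, parts_append_replicate_false, hv]

lemma toPartition_surjective (m : {m : Multiset ℕ // IsPartitionM m}) :
    ∃ l, Even (charge l) ∧ toPartition l = m := by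
  obtain ⟨l, hl⟩ := exists_parts_interleave_eq (replicate (card m.1) 0 + m.1)
  refine ⟨l, ?_, ?_⟩
  · rw [even_charge_iff, ← card_parts, hl]
    simp [← two_mul]
  · rw [toPartition, hl, positiveParts_replicate_zero_add, positiveParts_of_isPartitionM m.2]

lemma toCoreQuotient_surjective
    (x : ℕ × {m : Multiset ℕ // IsPartitionM m} × {m : Multiset ℕ // IsPartitionM m}) :
    ∃ l, Even (charge l) ∧ toCoreQuotient l = x := by
  obtain ⟨k, ⟨q, hq⟩, ⟨q', hq'⟩⟩ := x
  set c := coreCharge k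
  obtain ⟨l, hfst, hsnd⟩ := exists_parts_map_fst_snd_eq
    (replicate (card q' + c.toNat) 0 + q) (replicate (card q + (-c).toNat) 0 + q')
  have hc : charge l = c := by
    rw [charge, ← card_parts, ← card_parts, hfst, hsnd]
    simp only [card_add, card_replicate]
    omega
  refine ⟨l, hc ▸ even_coreCharge k, ?_⟩
  rw [toCoreQuotient, hc, coreSize_coreCharge, hfst, hsnd, positiveParts_replicate_zero_add,
    positiveParts_replicate_zero_add, positiveParts_of_isPartitionM hq,
    positiveParts_of_isPartitionM hq']

end BoundaryWord

abbrev BoundaryWord.BalancedWord := {l : List (Bool × Bool) // Even (charge l)}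

open BoundaryWord in
noncomputable def coreQuotientEquiv :
    {m : Multiset ℕ // IsPartitionM m} ≃
      ℕ × {m : Multiset ℕ // IsPartitionM m} × {m : Multiset ℕ // IsPartitionM m} :=
  equivOfSameFibres (f := fun l : BalancedWord => toPartition l)
    (g := fun l : BalancedWord => toCoreQuotient l)
    (fun m => let ⟨l, he, hl⟩ := toPartition_surjective m; ⟨⟨l, he⟩, hl⟩)
    (fun x => let ⟨l, he, hl⟩ := toCoreQuotient_surjective x; ⟨⟨l, he⟩, hl⟩)
    (fun l l' => toPartition_eq_iff l.2 l'.2)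

open BoundaryWord in
theorem two_mul_sum_eq_coreQuotientEquiv (m : {m : Multiset ℕ // IsPartitionM m}) :
    2 * m.1.sum = (coreQuotientEquiv m).1 * ((coreQuotientEquiv m).1 + 1) +
      4 * (coreQuotientEquiv m).2.1.1.sum + 4 * (coreQuotientEquiv m).2.2.1.sum := by
  obtain ⟨l, he, rfl⟩ := toPartition_surjective m
  have hl : coreQuotientEquiv (toPartition l) = toCoreQuotient l :=
    equivOfSameFibres_apply _ _ _ (⟨l, he⟩ : BalancedWord)
  rw [hl]
  simp only [toPartition, toCoreQuotient, sum_positiveParts]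
  have h := two_mul_sum_parts_interleave l
  rw [← coreSize_mul_succ] at h
  exact_mod_cast h

def staircase (k : ℕ) : Multiset ℕ := (range k).map (· + 1)

lemma card_staircase (k : ℕ) : card (staircase k) = k := by
  simp [staircase]

lemma two_mul_sum_staircase (k : ℕ) : 2 * (staircase k).sum = k * (k + 1) := by
  induction k with
  | zero => rfl
  | succ k ih =>
    simp only [staircase, range_succ, map_cons, sum_cons] at ih ⊢
    linarith

lemma IsStaircase.eq_staircase_card {s : Multiset ℕ} (hs : IsStaircase s) :
    s = staircase (card s) := by
  obtain ⟨k, rfl⟩ := hs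
  exact congrArg staircase (card_staircase k).symm

lemma IsStaircase.two_mul_sum {s : Multiset ℕ} (hs : IsStaircase s) :
    2 * s.sum = card s * (card s + 1) := by
  rw [hs.eq_staircase_card, card_staircase, two_mul_sum_staircase]

lemma IsStaircase.card_le_sum {s : Multiset ℕ} (hs : IsStaircase s) : card s ≤ s.sum := by
  obtain ⟨k, rfl⟩ := hs
  exact (card_nsmul_le_sum (a := 1) (by simp)).trans_eq' (by simp)

def staircaseEquiv : ℕ ≃ {s : Multiset ℕ // IsStaircase s} where
  toFun k := ⟨staircase k, k, rfl⟩
  invFun s := card s.1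
  left_inv := card_staircase
  right_inv s := Subtype.ext s.2.eq_staircase_card.symm

def doubleEquiv :
    {q : Multiset ℕ // IsPartitionM q} ≃ {q : Multiset ℕ // IsEvenPartition q} where
  toFun q := ⟨q.1.map (2 * ·), by
    refine ⟨fun i hi => ?_, fun i hi => ?_⟩ <;> obtain ⟨j, hj, rfl⟩ := mem_map.1 hi
    · exact Nat.mul_pos two_pos (q.2 j hj)
    · exact even_two_mul j⟩
  invFun q := ⟨q.1.map (· / 2), fun i hi => by
    obtain ⟨j, hj, rfl⟩ := mem_map.1 hi
    obtain ⟨r, rfl⟩ := q.2.2 j hj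
    have := q.2.1 _ hj
    omega⟩
  left_inv q := Subtype.ext <| by
    simp only [map_map, Function.comp_def]
    exact (map_congr rfl fun i _ => by omega).trans (map_id' _)
  right_inv q := Subtype.ext <| by
    simp only [map_map, Function.comp_def]
    refine (map_congr rfl fun i hi => ?_).trans (map_id' _)
    obtain ⟨r, rfl⟩ := q.2.2 i hi
    omega

lemma sum_doubleEquiv (q : {q : Multiset ℕ // IsPartitionM q}) :
    (doubleEquiv q).1.sum = 2 * q.1.sum :=
  (sum_map_mul_left (f := id)).trans (by rw [map_id])

noncomputable def staircaseEvenEvenEquiv :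
    {m : Multiset ℕ // IsPartitionM m} ≃ {s : Multiset ℕ // IsStaircase s} ×
      {q : Multiset ℕ // IsEvenPartition q} × {q : Multiset ℕ // IsEvenPartition q} :=
  coreQuotientEquiv.trans
    (staircaseEquiv.prodCongr (doubleEquiv.prodCongr doubleEquiv))

lemma sum_staircaseEvenEvenEquiv_symm (x : {s : Multiset ℕ // IsStaircase s} ×
      {q : Multiset ℕ // IsEvenPartition q} × {q : Multiset ℕ // IsEvenPartition q}) :
    (staircaseEvenEvenEquiv.symm x).1.sum = x.1.1.sum + x.2.1.1.sum + x.2.2.1.sum := by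
  obtain ⟨m, rfl⟩ := staircaseEvenEvenEquiv.surjective x
  have hm := two_mul_sum_eq_coreQuotientEquiv m
  have hs : 2 * (staircaseEquiv (coreQuotientEquiv m).1).1.sum = _ :=
    two_mul_sum_staircase _
  rw [Equiv.symm_apply_apply]
  simp only [staircaseEvenEvenEquiv, Equiv.trans_apply, Equiv.prodCongr_apply, Prod.map,
    sum_doubleEquiv]
  linarith

noncomputable def twoColorEquiv (n : ℕ) :
    {x : Multiset ℕ × Multiset ℕ //
        IsPartitionM x.1 ∧ IsEvenPartition x.2 ∧ x.1.sum + x.2.sum = n} ≃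
      {t : Multiset ℕ × Multiset ℕ × Multiset ℕ × Multiset ℕ //
        IsEvenPartition t.1 ∧ IsEvenPartition t.2.1 ∧ IsEvenPartition t.2.2.1 ∧
        IsStaircase t.2.2.2 ∧ t.1.sum + t.2.1.sum + t.2.2.1.sum + t.2.2.2.sum = n} where
  toFun x :=
    let d := staircaseEvenEvenEquiv ⟨x.1.1, x.2.1⟩
    ⟨(x.1.2, d.2.1, d.2.2, d.1), x.2.2.1, d.2.1.2, d.2.2.2, d.1.2, by
      have := sum_staircaseEvenEvenEquiv_symm d
      rw [Equiv.symm_apply_apply] at this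
      have := x.2.2.2
      dsimp only at *
      omega⟩
  invFun t :=
    let m := staircaseEvenEvenEquiv.symm
      (⟨t.1.2.2.2, t.2.2.2.2.1⟩, ⟨t.1.2.1, t.2.2.1⟩, ⟨t.1.2.2.1, t.2.2.2.1⟩)
    ⟨(m.1, t.1.1), m.2, t.2.1, by
      have := sum_staircaseEvenEvenEquiv_symm
        (⟨t.1.2.2.2, t.2.2.2.2.1⟩, ⟨t.1.2.1, t.2.2.1⟩, ⟨t.1.2.2.1, t.2.2.2.1⟩)
      have := t.2.2.2.2.2
      dsimp only [m] at *
      omega⟩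
  left_inv x := by simp
  right_inv t := by simp

lemma le_nsmul_range_of_sum_le {m : Multiset ℕ} {N : ℕ} (hm : IsPartitionM m)
    (hsum : m.sum ≤ N) :
    m ≤ N • range (N + 1) := by
  rw [le_iff_count]
  intro i
  by_cases hi : i ∈ m
  · have hcard : card m ≤ m.sum := by simpa using card_nsmul_le_sum hm
    rw [count_nsmul, count_eq_one_of_mem (nodup_range _)
      (mem_range.2 (Nat.lt_succ_of_le ((le_sum_of_mem hi).trans hsum))), mul_one]
    exact (count_le_card i m).trans (hcard.trans hsum)
  · simp [count_eq_zero.2 hi]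

abbrev EvenTriples (N : ℕ) := {t : Multiset ℕ × Multiset ℕ × Multiset ℕ //
  IsEvenPartition t.1 ∧ IsEvenPartition t.2.1 ∧ IsEvenPartition t.2.2 ∧
    t.1.sum + t.2.1.sum + t.2.2.sum = N}

instance instFiniteEvenTriples (N : ℕ) : Finite (EvenTriples N) := by
  set b := N • range (N + 1)
  have hb (t : EvenTriples N) : t.1 ∈ Set.Iic (b, b, b) := by
    obtain ⟨⟨q₁, q₂, q₃⟩, h₁, h₂, h₃, hsum⟩ := t
    dsimp only at h₁ h₂ h₃ hsum
    show (q₁, q₂, q₃) ≤ (b, b, b)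
    exact ⟨le_nsmul_range_of_sum_le (m := q₁) h₁.1 (by omega),
      le_nsmul_range_of_sum_le (m := q₂) h₂.1 (by omega),
      le_nsmul_range_of_sum_le (m := q₃) h₃.1 (by omega)⟩
  exact Finite.of_injective (fun t => (⟨t.1, hb t⟩ : Set.Iic (b, b, b)))
    fun t t' h => Subtype.ext (by simpa using h)

noncomputable def quadruplesEquivSigma (n : ℕ) :
    {t : Multiset ℕ × Multiset ℕ × Multiset ℕ × Multiset ℕ //
        IsEvenPartition t.1 ∧ IsEvenPartition t.2.1 ∧ IsEvenPartition t.2.2.1 ∧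
        IsStaircase t.2.2.2 ∧ t.1.sum + t.2.1.sum + t.2.2.1.sum + t.2.2.2.sum = n} ≃
      Σ k : (Finset.range (n + 1)).filter (fun m => m * (m + 1) / 2 ≤ n),
        EvenTriples (n - k * (k + 1) / 2) where
  toFun t :=
    have hs := t.2.2.2.2.1.two_mul_sum
    have hcard := t.2.2.2.2.1.card_le_sum
    have hn := t.2.2.2.2.2
    ⟨⟨card t.1.2.2.2, Finset.mem_filter.2 ⟨Finset.mem_range.2 (by omega), by omega⟩⟩,
      ⟨(t.1.1, t.1.2.1, t.1.2.2.1), t.2.1, t.2.2.1, t.2.2.2.1, by dsimp only; omega⟩⟩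
  invFun p :=
    have hs := two_mul_sum_staircase p.1
    have hk := (Finset.mem_filter.1 p.1.2).2
    have hn := p.2.2.2.2.2
    ⟨(p.2.1.1, p.2.1.2.1, p.2.1.2.2, staircase p.1), p.2.2.1, p.2.2.2.1, p.2.2.2.2.1, ⟨p.1, rfl⟩,
      by dsimp only at hn ⊢; omega⟩
  left_inv t := Subtype.ext <| by
    simp [← t.2.2.2.2.1.eq_staircase_card]
  right_inv p := Sigma.subtype_ext (Subtype.ext (card_staircase _)) rfl

theorem two_color_count (n : ℕ) :
    Nat.card {x : Multiset ℕ × Multiset ℕ //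
        IsPartitionM x.1 ∧ IsEvenPartition x.2 ∧ x.1.sum + x.2.sum = n} =
      Nat.card {t : Multiset ℕ × Multiset ℕ × Multiset ℕ × Multiset ℕ //
        IsEvenPartition t.1 ∧ IsEvenPartition t.2.1 ∧ IsEvenPartition t.2.2.1 ∧
        IsStaircase t.2.2.2 ∧
        t.1.sum + t.2.1.sum + t.2.2.1.sum + t.2.2.2.sum = n} ∧
    Nat.card {x : Multiset ℕ × Multiset ℕ //
        IsPartitionM x.1 ∧ IsEvenPartition x.2 ∧ x.1.sum + x.2.sum = n} =
      ∑ m ∈ (Finset.range (n + 1)).filter (fun m => m * (m + 1) / 2 ≤ n),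
        Nat.card {t : Multiset ℕ × Multiset ℕ × Multiset ℕ //
          IsEvenPartition t.1 ∧ IsEvenPartition t.2.1 ∧ IsEvenPartition t.2.2 ∧
          t.1.sum + t.2.1.sum + t.2.2.sum = n - m * (m + 1) / 2} := by
  have h := Nat.card_congr (twoColorEquiv n)
  refine ⟨h, h.trans ?_⟩
  rw [Nat.card_congr (quadruplesEquivSigma n), Nat.card_sigma]
  exact Finset.sum_coe_sort _ fun m => Nat.card (EvenTriples (n - m * (m + 1) / 2))
end

section
/- The number of pairs (λ¹, λ²) of partitions into distinct odd parts with |λ¹| + |λ²| = n equals the number of pairs (π, Δ) where π is a partition into even parts, Δ is either empty, a partition of the form (2m−1, 2m−3, ..., 3, 1) for some m ≥ 1, or such a partition with the part 1 overlined, and |π| + |Δ| = n. -/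
/-!
A partition into `k` distinct odd parts `2u₁ + 1 < ⋯ < 2uₖ + 1` corresponds, by subtracting the
staircase `0, 1, …, k - 1` from the `uᵢ`, to an arbitrary multiset `P` of `k` naturals, and its
size is `2|P| + k²`. If `P` has `a = b + m` entries and `Q` has `b`, then `a² + b² = 2ab + m²`.
Gluing the entries of `Q` to the rows of a `b × a` rectangle and putting the conjugate of `P`
below it gives a partition of `|P| + |Q| + ab`, from which `b`, `P` and `Q` are read back off the
largest `b × (b + m)` rectangle in its Young diagram. Doubling that partition and recording
`a - b` as the odd staircase of size `m²`, overlined when `a > b`, gives the bijection.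
-/

theorem Multiset.countP_mono_left {α : Type*} {p q : α → Prop} [DecidablePred p]
    [DecidablePred q] {s : Multiset α} (h : ∀ x ∈ s, p x → q x) :
    s.countP p ≤ s.countP q := by
  induction s using Quot.inductionOn
  simpa using List.countP_mono_left (by simpa using h)

theorem Multiset.filter_add_replicate_eq_self {α : Type*} {p : α → Prop} [DecidablePred p]
    {s : Multiset α} {c : α} (h : ∀ x ∈ s, ¬ p x → x = c) :
    s.filter p + replicate (card s - s.countP p) c = s := by
  conv_rhs => rw [← filter_add_not p s]
  congr 1
  refine (eq_replicate.mpr ⟨?_, fun x hx => h x (mem_filter.mp hx).1 (mem_filter.mp hx).2⟩).symm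
  rw [← countP_eq_card_filter, card_eq_countP_add_countP p s, Nat.add_sub_cancel_left]

theorem Finset.lt_card_iff_mem_of_isLowerSet {S : Finset ℕ} (hS : IsLowerSet (S : Set ℕ))
    (j : ℕ) : j < S.card ↔ j ∈ S := by
  constructor
  · intro hj
    by_contra hjS
    have hsub : S ⊆ Finset.range j := fun l hl =>
      Finset.mem_range.mpr (lt_of_not_ge fun hjl => hjS (hS hjl hl))
    exact hj.not_ge (by simpa using Finset.card_le_card hsub)
  · intro hjS
    have hsub : Finset.range (j + 1) ⊆ S := fun l hl =>
      hS (Nat.lt_succ_iff.mp (Finset.mem_range.mp hl)) hjS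
    simpa using Finset.card_le_card hsub

theorem Nat.card_subtype_and_eq_congr {α β γ : Type*} {p : α → Prop} {q : β → Prop}
    (e : Subtype p ≃ Subtype q) {f : α → γ} {g : β → γ} (h : ∀ a, g (e a) = f a)
    (n : γ) :
    Nat.card {a // p a ∧ f a = n} = Nat.card {b // q b ∧ g b = n} :=
  Nat.card_congr <| (Equiv.subtypeSubtypeEquivSubtypeInter p (f · = n)).symm.trans <|
    (e.subtypeEquiv fun a => by rw [h]).trans (Equiv.subtypeSubtypeEquivSubtypeInter q (g · = n))

namespace ModifiedWright

open Multiset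

def addIndex (l : List ℕ) : List ℕ := l.mapIdx fun i a => a + i

def subIndex (l : List ℕ) : List ℕ := l.mapIdx fun i a => a - i

lemma subIndex_addIndex (l : List ℕ) : subIndex (addIndex l) = l := by
  apply List.ext_getElem (by simp [subIndex, addIndex])
  intro i _ _
  simp [subIndex, addIndex]

lemma getElem_add_sub_le_of_pairwise_lt {l : List ℕ} (hl : l.Pairwise (· < ·)) {i j : ℕ}
    (hij : i ≤ j) (hj : j < l.length) : l[i] + (j - i) ≤ l[j] := by
  induction j, hij using Nat.le_induction with
  | base => simp
  | succ j hij ih =>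
    have := List.pairwise_iff_getElem.mp hl j (j + 1) (by omega) hj (by omega)
    have := ih (by omega)
    omega

lemma addIndex_subIndex {l : List ℕ} (hl : l.Pairwise (· < ·)) : addIndex (subIndex l) = l := by
  apply List.ext_getElem (by simp [subIndex, addIndex])
  intro i _ hi
  have := getElem_add_sub_le_of_pairwise_lt hl (Nat.zero_le i) hi
  simp only [addIndex, subIndex, List.getElem_mapIdx]
  omega

lemma pairwise_lt_addIndex {l : List ℕ} (hl : l.Pairwise (· ≤ ·)) :
    (addIndex l).Pairwise (· < ·) := by
  rw [List.pairwise_iff_getElem] at hl ⊢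
  intro i j hi hj hij
  have := hl i j (by simpa [addIndex] using hi) (by simpa [addIndex] using hj) hij
  simp only [addIndex, List.getElem_mapIdx]
  omega

lemma pairwise_le_subIndex {l : List ℕ} (hl : l.Pairwise (· < ·)) :
    (subIndex l).Pairwise (· ≤ ·) := by
  rw [List.pairwise_iff_getElem]
  intro i j _ hj hij
  have := getElem_add_sub_le_of_pairwise_lt hl hij.le (by simpa [subIndex] using hj)
  simp only [subIndex, List.getElem_mapIdx]
  omega

lemma sum_addIndex (l : List ℕ) :
    2 * (addIndex l).sum = 2 * l.sum + l.length * (l.length - 1) := by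
  have : addIndex l = List.zipWith (· + ·) l (List.range l.length) := by
    apply List.ext_getElem (by simp [addIndex])
    intro i _ _
    simp [addIndex]
  have hrange : (List.range l.length).sum * 2 = l.length * (l.length - 1) := by
    simpa [Finset.sum, Finset.range_val, Multiset.range] using Finset.sum_range_id_mul_two _
  rw [this, ← List.sum_add_sum_eq_sum_zipWith_of_length_eq _ _ List.length_range.symm]
  omega

lemma sort_coe_of_pairwise {l : List ℕ} (hl : l.Pairwise (· ≤ ·)) :
    (l : Multiset ℕ).sort = l :=
  List.mergeSort_eq_self _ (by simpa using hl)

lemma pairwise_lt_sort {s : Multiset ℕ} (hs : s.Nodup) : s.sort.Pairwise (· < ·) := by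
  have hnd : s.sort.Nodup := by rwa [← coe_nodup, sort_eq]
  exact ((pairwise_sort s _).and hnd).imp fun h => lt_of_le_of_ne h.1 h.2

def addStaircase (M : Multiset ℕ) : Multiset ℕ := addIndex M.sort

def subStaircase (s : Multiset ℕ) : Multiset ℕ := subIndex s.sort

@[simp] lemma card_addStaircase (M : Multiset ℕ) : card (addStaircase M) = card M := by
  simp [addStaircase, addIndex]

lemma nodup_addStaircase (M : Multiset ℕ) : (addStaircase M).Nodup :=
  coe_nodup.mpr (pairwise_lt_addIndex (pairwise_sort M _)).nodup

lemma subStaircase_addStaircase (M : Multiset ℕ) : subStaircase (addStaircase M) = M := by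
  rw [subStaircase, addStaircase,
    sort_coe_of_pairwise ((pairwise_lt_addIndex (pairwise_sort M _)).imp le_of_lt),
    subIndex_addIndex, sort_eq]

lemma addStaircase_subStaircase {s : Multiset ℕ} (hs : s.Nodup) :
    addStaircase (subStaircase s) = s := by
  rw [addStaircase, subStaircase, sort_coe_of_pairwise (pairwise_le_subIndex (pairwise_lt_sort hs)),
    addIndex_subIndex (pairwise_lt_sort hs), sort_eq]

lemma sum_addStaircase (M : Multiset ℕ) :
    2 * (addStaircase M).sum = 2 * M.sum + card M * (card M - 1) := by
  rw [addStaircase, sum_coe, sum_addIndex, length_sort, ← sum_coe, sort_eq]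

lemma sum_map_two_mul_add_one (s : Multiset ℕ) :
    (s.map (2 * · + 1)).sum = 2 * s.sum + card s := by
  induction s using Multiset.induction with
  | empty => simp
  | cons a s ih =>
    simp only [map_cons, sum_cons, card_cons, ih]
    ring

def distinctOddEquiv : {x : Multiset ℕ // IsDistinctOdd x} ≃ Multiset ℕ where
  toFun x := subStaircase (x.1.map (· / 2))
  invFun M := ⟨(addStaircase M).map (2 * · + 1),
    (nodup_addStaircase M).map fun a b h => by omega, by simp⟩
  left_inv := by
    rintro ⟨x, hnd, hodd⟩
    have hhalf : ∀ a ∈ x, 2 * (a / 2) + 1 = a := fun a ha => by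
      obtain ⟨k, rfl⟩ := hodd a ha
      omega
    have hnd' : (x.map (· / 2)).Nodup := hnd.map_on fun a ha b hb (h : a / 2 = b / 2) => by
      rw [← hhalf a ha, ← hhalf b hb, h]
    ext1
    simp only [addStaircase_subStaircase hnd', map_map]
    conv_rhs => rw [← map_id x]
    exact map_congr rfl hhalf
  right_inv M := by
    have hcomp : ((· / 2) ∘ (2 * · + 1) : ℕ → ℕ) = id :=
      funext fun a => show (2 * a + 1) / 2 = a by omega
    simp only [map_map, hcomp, map_id, subStaircase_addStaircase]

lemma sum_distinctOddEquiv (x : {x : Multiset ℕ // IsDistinctOdd x}) :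
    x.1.sum = 2 * (distinctOddEquiv x).sum + card (distinctOddEquiv x) ^ 2 := by
  set M := distinctOddEquiv x
  have hx : x = distinctOddEquiv.symm M := (Equiv.symm_apply_apply _ x).symm
  have := sum_addStaircase M
  have : card M * (card M - 1) + card M = card M ^ 2 := by
    cases card M <;> simp [sq, Nat.mul_succ]
  rw [hx]
  simp only [distinctOddEquiv, Equiv.coe_fn_symm_mk, sum_map_two_mul_add_one, card_addStaircase]
  omega

lemma countP_lt_eq_zero_of_sup_le {A : Multiset ℕ} {k : ℕ} (h : A.sup ≤ k) :
    A.countP (k < ·) = 0 :=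
  countP_eq_zero.mpr fun _ ha => not_lt.mpr ((le_sup ha).trans h)

lemma count_add_countP_lt (A : Multiset ℕ) (c : ℕ) :
    A.count c + A.countP (c < ·) = A.countP (c ≤ ·) := by
  induction A using Multiset.induction with
  | empty => simp
  | cons a A ih =>
    simp only [count_cons, countP_cons]
    split_ifs <;> omega

lemma eq_of_countP_lt_eq {A B : Multiset ℕ} (hA : ∀ a ∈ A, 0 < a) (hB : ∀ b ∈ B, 0 < b)
    (h : ∀ k, A.countP (k < ·) = B.countP (k < ·)) : A = B := by
  ext v
  cases v with
  | zero =>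
    rw [count_eq_zero.mpr fun h0 => (hA 0 h0).false, count_eq_zero.mpr fun h0 => (hB 0 h0).false]
  | succ v =>
    have hle (C : Multiset ℕ) : C.countP (v + 1 ≤ ·) = C.countP (v < ·) :=
      countP_congr rfl fun x _ => propext Nat.add_one_le_iff
    have := count_add_countP_lt A (v + 1)
    have := count_add_countP_lt B (v + 1)
    rw [hle] at *
    have := h v
    have := h (v + 1)
    omega

def conjugate (A : Multiset ℕ) : Multiset ℕ := (range A.sup).map fun k => A.countP (k < ·)

@[simp] lemma card_conjugate (A : Multiset ℕ) : card (conjugate A) = A.sup := by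
  simp [conjugate]

lemma pos_of_mem_conjugate {A : Multiset ℕ} {y : ℕ} (hy : y ∈ conjugate A) : 0 < y := by
  obtain ⟨k, hk, rfl⟩ := mem_map.mp hy
  by_contra h0
  have := countP_eq_zero.mp (Nat.eq_zero_of_not_pos h0)
  exact (mem_range.mp hk).not_ge (sup_le.mpr fun a ha => not_lt.mp (this a ha))

lemma le_card_of_mem_conjugate {A : Multiset ℕ} {y : ℕ} (hy : y ∈ conjugate A) :
    y ≤ card A := by
  obtain ⟨k, -, rfl⟩ := mem_map.mp hy
  exact countP_le_card _ _

lemma sum_range_countP_lt (A : Multiset ℕ) {N : ℕ} (hN : ∀ a ∈ A, a ≤ N) :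
    ∑ k ∈ Finset.range N, A.countP (k < ·) = A.sum := by
  induction A using Multiset.induction with
  | empty => simp
  | cons a A ih =>
    have ha : (Finset.range N).filter (· < a) = Finset.range a := by
      have := hN a (mem_cons_self a A)
      ext k
      simp only [Finset.mem_filter, Finset.mem_range]
      omega
    simp only [countP_cons, Finset.sum_add_distrib, Finset.sum_boole, Nat.cast_id, ha,
      Finset.card_range, sum_cons, ih fun b hb => hN b (mem_cons_of_mem hb)]
    omega

lemma sum_conjugate (A : Multiset ℕ) : (conjugate A).sum = A.sum :=
  sum_range_countP_lt A fun _ ha => le_sup ha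

lemma lt_countP_conjugate_iff (A : Multiset ℕ) (j k : ℕ) :
    j < (conjugate A).countP (k < ·) ↔ k < A.countP (j < ·) := by
  have hS : (conjugate A).countP (k < ·) =
      ((Finset.range A.sup).filter fun l => k < A.countP (l < ·)).card := by
    simp only [conjugate, countP_map]; rfl
  rw [hS, Finset.lt_card_iff_mem_of_isLowerSet, Finset.mem_filter, Finset.mem_range,
    and_iff_right_iff_imp]
  · intro hj
    by_contra hsup
    rw [countP_lt_eq_zero_of_sup_le (not_lt.mp hsup)] at hj
    exact Nat.not_lt_zero _ hj
  · intro l i hil hl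
    simp only [Finset.coe_filter, Finset.mem_range, Set.mem_ofPred_eq] at hl ⊢
    exact ⟨hil.trans_lt hl.1,
      hl.2.trans_le (Multiset.countP_mono_left fun x _ hx => hil.trans_lt hx)⟩

lemma conjugate_conjugate (A : Multiset ℕ) : conjugate (conjugate A) = A.filter (0 < ·) := by
  refine eq_of_countP_lt_eq (fun _ => pos_of_mem_conjugate) (fun _ h => (mem_filter.mp h).2)
    fun k => eq_of_forall_lt_iff fun j => ?_
  rw [lt_countP_conjugate_iff, lt_countP_conjugate_iff, countP_filter]
  exact Iff.of_eq <| congrArg _ <|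
    countP_congr rfl fun x _ => propext ⟨fun h => ⟨h, by omega⟩, And.left⟩

def padZeros (n : ℕ) (A : Multiset ℕ) : Multiset ℕ := A + replicate (n - card A) 0

lemma card_padZeros {n : ℕ} {A : Multiset ℕ} (h : card A ≤ n) : card (padZeros n A) = n := by
  rw [padZeros, card_add, card_replicate]; omega

lemma conjugate_padZeros (n : ℕ) (A : Multiset ℕ) : conjugate (padZeros n A) = conjugate A := by
  have hsup : (padZeros n A).sup = A.sup := by
    simp +contextual [padZeros, Multiset.sup_add, mem_replicate]
  simp only [conjugate, hsup]
  refine map_congr rfl fun k _ => ?_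
  simp +contextual [padZeros, countP_add, countP_eq_zero, mem_replicate]

lemma padZeros_filter_pos (P : Multiset ℕ) : padZeros (card P) (P.filter (0 < ·)) = P := by
  rw [padZeros, ← countP_eq_card_filter]
  exact filter_add_replicate_eq_self fun x _ hx => Nat.eq_zero_of_not_pos hx

/-- The `b` largest parts of `π`, when the `b`-th largest one is `c`. -/
def topParts (b c : ℕ) (π : Multiset ℕ) : Multiset ℕ :=
  π.filter (c < ·) + replicate (b - π.countP (c < ·)) c

lemma topParts_add {c : ℕ} {X Y : Multiset ℕ} (hX : ∀ x ∈ X, c ≤ x)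
    (hY : ∀ y ∈ Y, y ≤ c) :
    topParts (card X) c (X + Y) = X := by
  have hYc : Y.filter (c < ·) = 0 := filter_eq_nil.mpr fun y hy => not_lt.mpr (hY y hy)
  have hYc' : Y.countP (c < ·) = 0 := countP_eq_zero.mpr fun y hy => not_lt.mpr (hY y hy)
  rw [topParts, filter_add, hYc, add_zero, countP_add, hYc', add_zero]
  exact filter_add_replicate_eq_self fun x hx hcx => le_antisymm (not_lt.mp hcx) (hX x hx)

section topParts

variable {b c : ℕ} {π : Multiset ℕ}

lemma count_topParts (v : ℕ) : (topParts b c π).count v =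
    (if c < v then π.count v else 0) + (if v = c then b - π.countP (c < ·) else 0) := by
  rw [topParts, count_add, count_filter, count_replicate]
  split_ifs <;> omega

lemma card_topParts (h : π.countP (c < ·) ≤ b) : card (topParts b c π) = b := by
  rw [topParts, card_add, card_replicate, ← countP_eq_card_filter]
  omega

lemma le_of_mem_topParts {x : ℕ} (hx : x ∈ topParts b c π) : c ≤ x := by
  rcases mem_add.mp hx with hx | hx
  · exact (mem_filter.mp hx).2.le
  · exact (eq_of_mem_replicate hx).ge

lemma topParts_le (h : b ≤ π.countP (c ≤ ·)) : topParts b c π ≤ π := by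
  have := count_add_countP_lt π c
  refine le_iff_count.mpr fun v => ?_
  rw [count_topParts]
  rcases lt_trichotomy c v with hcv | rfl | hvc
  · rw [if_pos hcv, if_neg hcv.ne', add_zero]
  · rw [if_neg (lt_irrefl c), if_pos rfl]
    omega
  · rw [if_neg hvc.not_gt, if_neg hvc.ne]
    exact Nat.zero_le _

lemma le_of_mem_sub_topParts {y : ℕ} (hy : y ∈ π - topParts b c π) :
    y ≤ c := by
  by_contra hcy
  have := count_topParts (b := b) (c := c) (π := π) y
  rw [if_pos (not_le.mp hcy), if_neg (by omega), add_zero] at this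
  rw [← count_pos, count_sub, this] at hy
  omega

end topParts

section Durfee

variable (m : ℕ)

lemma exists_countP_lt_le (π : Multiset ℕ) : ∃ b, π.countP (b + m < ·) ≤ b :=
  ⟨card π, countP_le_card _ _⟩

/-- The number of rows of the largest `b × (b + m)` rectangle in the Young diagram of `π`. -/
def durfeeRank (π : Multiset ℕ) : ℕ := Nat.find (exists_countP_lt_le m π)

lemma countP_lt_durfeeRank_le (π : Multiset ℕ) :
    π.countP (durfeeRank m π + m < ·) ≤ durfeeRank m π :=
  Nat.find_spec (exists_countP_lt_le m π)

lemma durfeeRank_le_countP (π : Multiset ℕ) :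
    durfeeRank m π ≤ π.countP (durfeeRank m π + m ≤ ·) := by
  obtain h0 | hpos := Nat.eq_zero_or_pos (durfeeRank m π)
  · omega
  · have hmin : ¬ π.countP (durfeeRank m π - 1 + m < ·) ≤ durfeeRank m π - 1 :=
      Nat.find_min (exists_countP_lt_le m π) (Nat.sub_one_lt_of_lt hpos)
    have heq :
        π.countP (durfeeRank m π - 1 + m < ·) = π.countP (durfeeRank m π + m ≤ ·) :=
      countP_congr rfl fun x _ => propext (by constructor <;> intro <;> omega)
    omega

lemma durfeeRank_eq {π : Multiset ℕ} {b : ℕ} (h₁ : π.countP (b + m < ·) ≤ b)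
    (h₂ : b ≤ π.countP (b + m ≤ ·)) : durfeeRank m π = b := by
  refine le_antisymm (Nat.find_min' _ h₁) (not_lt.mp fun hlt => ?_)
  have hmono : π.countP (b + m ≤ ·) ≤ π.countP (durfeeRank m π + m < ·) :=
    Multiset.countP_mono_left fun x _ hx => by omega
  have := countP_lt_durfeeRank_le m π
  omega

end Durfee

/-- The `card Q × card P` rectangle, with the entries of `Q` appended to its rows and the
conjugate of `P` placed below it. -/
def durfeeGlue (P Q : Multiset ℕ) : Multiset ℕ := Q.map (· + card P) + conjugate P

def durfeeSplit (m : ℕ) (π : Multiset ℕ) : Multiset ℕ × Multiset ℕ :=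
  let c := durfeeRank m π + m
  let X := topParts (durfeeRank m π) c π
  (padZeros c (conjugate (π - X)), X.map (· - c))

lemma sum_durfeeGlue (P Q : Multiset ℕ) :
    (durfeeGlue P Q).sum = card Q * card P + P.sum + Q.sum := by
  rw [durfeeGlue, sum_add, sum_map_add, map_id', sum_conjugate, map_const', sum_replicate,
    smul_eq_mul]
  ring

lemma isPartitionM_durfeeGlue {P Q : Multiset ℕ} (h : card Q ≤ card P) :
    IsPartitionM (durfeeGlue P Q) := by
  intro i hi
  rcases mem_add.mp hi with hi | hi
  · obtain ⟨q, hq, rfl⟩ := mem_map.mp hi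
    have := card_pos_iff_exists_mem.mpr ⟨q, hq⟩
    omega
  · exact pos_of_mem_conjugate hi

lemma card_durfeeSplit (m : ℕ) (π : Multiset ℕ) :
    card (durfeeSplit m π).1 = card (durfeeSplit m π).2 + m := by
  have hY : card (conjugate (π - topParts (durfeeRank m π) (durfeeRank m π + m) π)) ≤
      durfeeRank m π + m :=
    (card_conjugate _).trans_le (sup_le.mpr fun _ => le_of_mem_sub_topParts)
  simp only [durfeeSplit, card_padZeros hY, card_map, card_topParts (countP_lt_durfeeRank_le m π)]

lemma durfeeGlue_padZeros_conjugate {c : ℕ} {X Y : Multiset ℕ} (hX : ∀ x ∈ X, c ≤ x)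
    (hY : ∀ y ∈ Y, 0 < y ∧ y ≤ c) :
    durfeeGlue (padZeros c (conjugate Y)) (X.map (· - c)) = X + Y := by
  have hcard : card (padZeros c (conjugate Y)) = c :=
    card_padZeros ((card_conjugate Y).trans_le (sup_le.mpr fun y hy => (hY y hy).2))
  rw [durfeeGlue, hcard, map_map, conjugate_padZeros, conjugate_conjugate,
    filter_eq_self.mpr fun y hy => (hY y hy).1]
  congr 1
  conv_rhs => rw [← map_id X]
  exact map_congr rfl fun x hx => Nat.sub_add_cancel (hX x hx)

lemma durfeeGlue_durfeeSplit (m : ℕ) {π : Multiset ℕ} (hπ : IsPartitionM π) :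
    durfeeGlue (durfeeSplit m π).1 (durfeeSplit m π).2 = π := by
  have hX : topParts (durfeeRank m π) (durfeeRank m π + m) π ≤ π :=
    topParts_le (durfeeRank_le_countP m π)
  rw [durfeeSplit, durfeeGlue_padZeros_conjugate (fun _ => le_of_mem_topParts)
    fun y hy => ⟨hπ y (mem_of_le (Multiset.sub_le_self _ _) hy), le_of_mem_sub_topParts hy⟩,
    add_tsub_cancel_of_le hX]

lemma durfeeRank_durfeeGlue {m : ℕ} {P Q : Multiset ℕ} (h : card P = card Q + m) :
    durfeeRank m (durfeeGlue P Q) = card Q := by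
  have hX : (Q.map (· + card P)).countP (card P ≤ ·) = card Q := by
    rw [countP_eq_card.mpr fun x hx => ?_, card_map]
    obtain ⟨q, -, rfl⟩ := mem_map.mp hx
    exact Nat.le_add_left _ _
  have hY : (conjugate P).countP (card P < ·) = 0 :=
    countP_eq_zero.mpr fun y hy => not_lt.mpr (le_card_of_mem_conjugate hy)
  apply durfeeRank_eq <;> rw [durfeeGlue, countP_add, ← h]
  · rw [hY, add_zero]
    exact (countP_le_card _ _).trans (card_map _ _).le
  · rw [hX]
    exact Nat.le_add_right _ _

lemma durfeeSplit_durfeeGlue {m : ℕ} {P Q : Multiset ℕ} (h : card P = card Q + m) :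
    durfeeSplit m (durfeeGlue P Q) = (P, Q) := by
  have hX : ∀ x ∈ Q.map (· + card P), card P ≤ x := by
    intro x hx
    obtain ⟨q, -, rfl⟩ := mem_map.mp hx
    exact Nat.le_add_left _ _
  have htop : topParts (card Q) (card P) (durfeeGlue P Q) = Q.map (· + card P) := by
    rw [durfeeGlue]
    simpa only [card_map] using topParts_add hX fun _ => le_card_of_mem_conjugate
  simp only [durfeeSplit]
  rw [durfeeRank_durfeeGlue h, ← h, htop, durfeeGlue, add_tsub_cancel_left, conjugate_conjugate,
    padZeros_filter_pos, map_map]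
  simp

def wrightGlue (P Q : Multiset ℕ) : Multiset ℕ :=
  if card Q < card P then durfeeGlue P Q else durfeeGlue Q P

def wrightSplit (π : Multiset ℕ) (r : ℤ) : Multiset ℕ × Multiset ℕ :=
  if 0 < r then durfeeSplit r.natAbs π else (durfeeSplit r.natAbs π).swap

lemma isPartitionM_wrightGlue (P Q : Multiset ℕ) : IsPartitionM (wrightGlue P Q) := by
  unfold wrightGlue
  split_ifs with h
  · exact isPartitionM_durfeeGlue h.le
  · exact isPartitionM_durfeeGlue (not_lt.mp h)

lemma wrightSplit_wrightGlue (P Q : Multiset ℕ) :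
    wrightSplit (wrightGlue P Q) ((card P : ℤ) - card Q) = (P, Q) := by
  by_cases h : card Q < card P
  · rw [wrightGlue, wrightSplit, if_pos h, if_pos (by omega)]
    exact durfeeSplit_durfeeGlue (by omega)
  · rw [wrightGlue, wrightSplit, if_neg h, if_neg (by omega), durfeeSplit_durfeeGlue (by omega),
      Prod.swap_prod_mk]

lemma wrightGlue_wrightSplit {π : Multiset ℕ} (hπ : IsPartitionM π) (r : ℤ) :
    wrightGlue (wrightSplit π r).1 (wrightSplit π r).2 = π ∧
      (card (wrightSplit π r).1 : ℤ) - card (wrightSplit π r).2 = r := by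
  have hcard := card_durfeeSplit r.natAbs π
  have hglue := durfeeGlue_durfeeSplit r.natAbs hπ
  by_cases hr : 0 < r
  · rw [wrightSplit, if_pos hr, wrightGlue, if_pos (by omega)]
    exact ⟨hglue, by omega⟩
  · rw [wrightSplit, if_neg hr, Prod.fst_swap, Prod.snd_swap, wrightGlue, if_neg (by omega)]
    exact ⟨hglue, by omega⟩

/-- The integer coordinate is the difference of the numbers of entries. -/
def wrightEquiv :
    Multiset ℕ × Multiset ℕ ≃ {π : Multiset ℕ // IsPartitionM π} × ℤ where
  toFun p :=
    (⟨wrightGlue p.1 p.2, isPartitionM_wrightGlue p.1 p.2⟩, (card p.1 : ℤ) - card p.2)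
  invFun z := wrightSplit z.1 z.2
  left_inv p := wrightSplit_wrightGlue p.1 p.2
  right_inv z := by
    obtain ⟨hglue, hdiff⟩ := wrightGlue_wrightSplit z.1.2 z.2
    exact Prod.ext (Subtype.ext hglue) hdiff

lemma wrightEquiv_weight (p : Multiset ℕ × Multiset ℕ) :
    2 * (wrightEquiv p).1.1.sum + (wrightEquiv p).2.natAbs ^ 2 =
      2 * (p.1.sum + p.2.sum) + card p.1 ^ 2 + card p.2 ^ 2 := by
  obtain ⟨P, Q⟩ := p
  simp only [wrightEquiv, Equiv.coe_fn_mk, wrightGlue]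
  split_ifs with h
  · obtain ⟨k, hk⟩ := Nat.exists_eq_add_of_lt h
    rw [sum_durfeeGlue, show ((card P : ℤ) - card Q).natAbs = k + 1 by omega, hk]
    ring
  · obtain ⟨k, hk⟩ := Nat.exists_eq_add_of_le (not_lt.mp h)
    rw [sum_durfeeGlue, show ((card P : ℤ) - card Q).natAbs = k by omega, hk]
    ring

def evenPartitionEquiv :
    {π : Multiset ℕ // IsPartitionM π} ≃ {y : Multiset ℕ // IsEvenPartition y} where
  toFun π := ⟨π.1.map (2 * ·), fun i hi => by
      obtain ⟨j, hj, rfl⟩ := mem_map.mp hi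
      have := π.2 j hj
      omega,
    fun i hi => by
      obtain ⟨j, -, rfl⟩ := mem_map.mp hi
      exact even_two_mul j⟩
  invFun y := ⟨y.1.map (· / 2), fun i hi => by
    obtain ⟨j, hj, rfl⟩ := mem_map.mp hi
    have := y.2.1 j hj
    obtain ⟨k, rfl⟩ := y.2.2 j hj
    omega⟩
  left_inv π := Subtype.ext <| by simp [map_map]
  right_inv y := Subtype.ext <| by
    change (y.1.map (· / 2)).map (2 * ·) = y.1
    conv_rhs => rw [← map_id y.1]
    rw [map_map]
    refine map_congr rfl fun j hj => ?_
    obtain ⟨k, rfl⟩ := y.2.2 j hj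
    exact show 2 * ((k + k) / 2) = k + k by omega

lemma sum_evenPartitionEquiv (π : {π : Multiset ℕ // IsPartitionM π}) :
    (evenPartitionEquiv π).1.sum = 2 * π.1.sum := by
  change (π.1.map (2 * ·)).sum = _
  rw [sum_map_mul_left, map_id']

def oddStaircase (k : ℕ) : Multiset ℕ := (range k).map (2 * · + 1)

lemma sum_oddStaircase (k : ℕ) : (oddStaircase k).sum = k ^ 2 := by
  induction k with
  | zero => rfl
  | succ k ih =>
    rw [oddStaircase, range_succ, map_cons, sum_cons, ← oddStaircase, ih]
    ring

@[simp] lemma card_oddStaircase (k : ℕ) : card (oddStaircase k) = k := by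
  simp [oddStaircase]

/-- The Boolean marks the overlined part `1`, present exactly for positive integers. -/
def oddStaircaseEquiv :
    ℤ ≃ {d : Multiset ℕ × Bool // IsOddStaircase d.1 ∧ (d.2 = true → d.1 ≠ 0)} where
  toFun r := ⟨(oddStaircase r.natAbs, decide (0 < r)), ⟨_, rfl⟩, fun h h0 => by
    have := congrArg card h0
    simp only [card_oddStaircase, card_zero, decide_eq_true_eq] at this h
    omega⟩
  invFun d := if d.1.2 then (card d.1.1 : ℤ) else -(card d.1.1 : ℤ)
  left_inv r := by
    simp only [card_oddStaircase]
    split_ifs with h <;> simp only [decide_eq_true_eq] at h <;> omega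
  right_inv := by
    rintro ⟨⟨d, s⟩, ⟨k, hk⟩, hs⟩
    obtain rfl : d = oddStaircase k := hk
    apply Subtype.ext
    cases s
    · simp
    · have : k ≠ 0 := fun h0 => hs rfl (by rw [h0]; rfl)
      simp only [if_true, card_oddStaircase, Int.natAbs_natCast, Prod.mk.injEq, true_and,
        decide_eq_true_eq]
      omega

lemma sum_oddStaircaseEquiv (r : ℤ) : (oddStaircaseEquiv r).1.1.sum = r.natAbs ^ 2 :=
  sum_oddStaircase _

def modifiedWrightEquiv :
    {x : Multiset ℕ × Multiset ℕ // IsDistinctOdd x.1 ∧ IsDistinctOdd x.2} ≃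
      {y : Multiset ℕ × (Multiset ℕ × Bool) //
        IsEvenPartition y.1 ∧ IsOddStaircase y.2.1 ∧ (y.2.2 = true → y.2.1 ≠ 0)} :=
  Equiv.subtypeProdEquivProd.trans <| (distinctOddEquiv.prodCongr distinctOddEquiv).trans <|
    wrightEquiv.trans <| (evenPartitionEquiv.prodCongr oddStaircaseEquiv).trans
      Equiv.subtypeProdEquivProd.symm

lemma sum_modifiedWrightEquiv
    (x : {x : Multiset ℕ × Multiset ℕ // IsDistinctOdd x.1 ∧ IsDistinctOdd x.2}) :
    (modifiedWrightEquiv x).1.1.sum + (modifiedWrightEquiv x).1.2.1.sum =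
      x.1.1.sum + x.1.2.sum := by
  set p := (distinctOddEquiv ⟨x.1.1, x.2.1⟩, distinctOddEquiv ⟨x.1.2, x.2.2⟩)
  have h₁ : x.1.1.sum = 2 * p.1.sum + card p.1 ^ 2 := sum_distinctOddEquiv ⟨x.1.1, x.2.1⟩
  have h₂ : x.1.2.sum = 2 * p.2.sum + card p.2 ^ 2 := sum_distinctOddEquiv ⟨x.1.2, x.2.2⟩
  change (evenPartitionEquiv (wrightEquiv p).1).1.sum +
    (oddStaircaseEquiv (wrightEquiv p).2).1.1.sum = _
  rw [sum_evenPartitionEquiv, sum_oddStaircaseEquiv, h₁, h₂]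
  linarith [wrightEquiv_weight p]

end ModifiedWright

theorem modified_wright_count (n : ℕ) :
    Nat.card {x : Multiset ℕ × Multiset ℕ //
        IsDistinctOdd x.1 ∧ IsDistinctOdd x.2 ∧ x.1.sum + x.2.sum = n} =
    Nat.card {y : Multiset ℕ × (Multiset ℕ × Bool) //
        IsEvenPartition y.1 ∧ IsOddStaircase y.2.1 ∧
        (y.2.2 = true → y.2.1 ≠ 0) ∧ y.1.sum + y.2.1.sum = n} := by
  simpa only [and_assoc] using Nat.card_subtype_and_eq_congr ModifiedWright.modifiedWrightEquiv
    ModifiedWright.sum_modifiedWrightEquiv n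
end
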